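/- arXiv:math/0211066 — 6 statements merged into one kernel-verified Lean document; each statement's English description precedes it below -/
import Mathlib

section
/- For every t > 0 and every compact set K ⊆ ℝ^d, the union ⋃_{x∈K} I(x,t) of the sets of Hopf-Lax maximizers over x ∈ K is a compact subset of ℝ^d. (Lemma 6.1(a).) -/
/-!
Write `F x y = u₀(y) + t·g((x - y)/t)` (`hlObj`). Since `g(z) ≤ c·|z|_∞^{d/(d+1)}` for `z ≥ 0`,
the decay of `u₀` beats the growth of `g`, while `F x x` is bounded below on `K` by continuity:
so `F x y < F x x` for `y ≤ x ∈ K` with `|y|_∞` large, and the maximizers stay in a fixed ball.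
The maximality condition `∀ z ≤ x, F x z ≤ F x y` is equivalent to `∀ w, F x (w ⊓ x) ≤ F x y`,
an intersection of closed conditions on `(x, y)`; so the graph of `x ↦ I(x,t)` is closed, and the
union is the projection of its compact part over `K × ball`.
-/

open Set Metric

noncomputable section

/-- `g(z) = c·(z₁⋯z_d)^{1/(d+1)}` (used only for `z ≥ 0`, where the product is `≥ 0`). -/
def gfun (c : ℝ) (d : ℕ) (z : Fin d → ℝ) : ℝ := c * (∏ i, z i) ^ (((d : ℝ) + 1)⁻¹)

/-- The set of values over which the Hopf-Lax supremum is taken. -/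
def hlSet (c : ℝ) (d : ℕ) (u0 : (Fin d → ℝ) → ℝ) (x : Fin d → ℝ) (t : ℝ) : Set ℝ :=
  (fun y => u0 y + t * gfun c d (t⁻¹ • (x - y))) '' {y | y ≤ x}

/-- The Hopf-Lax function `u(x,t)`, with `u(x,0) = u₀(x)`. -/
def hlu (c : ℝ) (d : ℕ) (u0 : (Fin d → ℝ) → ℝ) (x : Fin d → ℝ) (t : ℝ) : ℝ :=
  if t = 0 then u0 x else sSup (hlSet c d u0 x t)

/-- The set `I(x,t)` of maximizers in the Hopf-Lax formula. -/
def hlI (c : ℝ) (d : ℕ) (u0 : (Fin d → ℝ) → ℝ) (x : Fin d → ℝ) (t : ℝ) :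
    Set (Fin d → ℝ) :=
  {y | y ≤ x ∧ hlu c d u0 x t = u0 y + t * gfun c d (t⁻¹ • (x - y))}

/-- The decay condition at `−∞`:
for every `b`, `lim_{M→∞} sup { |y|_∞^{-d/(d+1)} u₀(y) : y ≤ b, |y|_∞ ≥ M } = −∞`. -/
def DecayCond (d : ℕ) (u0 : (Fin d → ℝ) → ℝ) : Prop :=
  ∀ b : Fin d → ℝ, ∀ C : ℝ, ∃ M : ℝ, 0 < M ∧ ∀ y : Fin d → ℝ, y ≤ b → M ≤ ‖y‖ →
    u0 y ≤ -C * ‖y‖ ^ ((d : ℝ) / ((d : ℝ) + 1))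

def hlObj (c : ℝ) (d : ℕ) (u0 : (Fin d → ℝ) → ℝ) (x : Fin d → ℝ) (t : ℝ) (y : Fin d → ℝ) : ℝ :=
  u0 y + t * gfun c d (t⁻¹ • (x - y))

theorem hlSet_eq_image (c : ℝ) (d : ℕ) (u0 : (Fin d → ℝ) → ℝ) (x : Fin d → ℝ) (t : ℝ) :
    hlSet c d u0 x t = hlObj c d u0 x t '' {y | y ≤ x} :=
  rfl

theorem continuous_gfun (c : ℝ) (d : ℕ) : Continuous (gfun c d) :=
  continuous_const.mul <| (continuous_finsetProd _ fun i _ => continuous_apply i).rpow_const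
    fun _ => Or.inr (by positivity)

theorem gfun_le_norm_rpow {c : ℝ} (hc : 0 ≤ c) {d : ℕ} {z : Fin d → ℝ} (hz : 0 ≤ z) :
    gfun c d z ≤ c * ‖z‖ ^ ((d : ℝ) / ((d : ℝ) + 1)) := by
  have hprod : ∏ i, z i ≤ ‖z‖ ^ d := by
    simpa using Finset.prod_le_prod (s := Finset.univ) (fun i _ => hz i)
      fun i _ => (le_abs_self (z i)).trans (norm_le_pi_norm z i)
  have hpow : (‖z‖ ^ d) ^ ((d : ℝ) + 1)⁻¹ = ‖z‖ ^ ((d : ℝ) / ((d : ℝ) + 1)) := by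
    rw [← Real.rpow_natCast, ← Real.rpow_mul (norm_nonneg z), div_eq_mul_inv]
  unfold gfun
  rw [← hpow]
  gcongr
  exact Finset.prod_nonneg fun i _ => hz i

variable {c : ℝ} {d : ℕ} {u0 : (Fin d → ℝ) → ℝ} {t : ℝ}

theorem continuous_hlObj (hu : Continuous u0) :
    Continuous fun p : (Fin d → ℝ) × (Fin d → ℝ) => hlObj c d u0 p.1 t p.2 :=
  (hu.comp continuous_snd).add <| continuous_const.mul <| (continuous_gfun c d).comp (by fun_prop)

theorem hlObj_le_of_norm_le (hc : 0 ≤ c) (ht : 0 < t) {x y : Fin d → ℝ} (hyx : y ≤ x)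
    (hxy : ‖x‖ ≤ ‖y‖) :
    hlObj c d u0 x t y ≤
      u0 y + t * c * (2 * t⁻¹) ^ ((d : ℝ) / ((d : ℝ) + 1)) * ‖y‖ ^ ((d : ℝ) / ((d : ℝ) + 1)) := by
  set q : ℝ := (d : ℝ) / ((d : ℝ) + 1)
  have hnonneg : 0 ≤ t⁻¹ • (x - y) := fun i => by
    simpa using mul_nonneg (inv_nonneg.2 ht.le) (sub_nonneg.2 (hyx i))
  have hnorm : ‖t⁻¹ • (x - y)‖ ≤ 2 * t⁻¹ * ‖y‖ := by
    rw [norm_smul, Real.norm_of_nonneg (inv_nonneg.2 ht.le), mul_comm 2, mul_assoc]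
    gcongr
    linarith [norm_sub_le x y]
  calc hlObj c d u0 x t y ≤ u0 y + t * (c * ‖t⁻¹ • (x - y)‖ ^ q) := by
        unfold hlObj
        gcongr
        exact gfun_le_norm_rpow hc hnonneg
    _ ≤ u0 y + t * (c * (2 * t⁻¹ * ‖y‖) ^ q) := by gcongr
    _ = u0 y + t * c * (2 * t⁻¹) ^ q * ‖y‖ ^ q := by
        rw [Real.mul_rpow (by positivity) (norm_nonneg y)]
        ring

theorem exists_hlObj_lt_of_isCompact (hc : 0 ≤ c) (ht : 0 < t) (hu : Continuous u0)
    (hdecay : DecayCond d u0) {K : Set (Fin d → ℝ)} (hK : IsCompact K) :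
    ∃ R, ∀ x ∈ K, ∀ y ≤ x, R < ‖y‖ → hlObj c d u0 x t y < hlObj c d u0 x t x := by
  obtain ⟨R₀, hR₀⟩ := hK.isBounded.exists_norm_le
  obtain ⟨m, hm⟩ := hK.bddBelow_image hu.continuousOn
  set L : ℝ := m + t * gfun c d 0
  have hL : ∀ x ∈ K, L ≤ hlObj c d u0 x t x := fun x hx => by
    simpa [hlObj, L] using hm (mem_image_of_mem u0 hx)
  have hKb : ∀ x ∈ K, x ≤ fun _ => R₀ := fun x hx i =>
    (le_abs_self (x i)).trans ((norm_le_pi_norm x i).trans (hR₀ x hx))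
  set q : ℝ := (d : ℝ) / ((d : ℝ) + 1)
  set B : ℝ := t * c * (2 * t⁻¹) ^ q
  obtain ⟨M, -, hM⟩ := hdecay (fun _ => R₀) (B + |L| + 1)
  refine ⟨max (max M R₀) 1, fun x hx y hyx hy => ?_⟩
  simp only [max_lt_iff] at hy
  obtain ⟨⟨hMy, hR₀y⟩, h1y⟩ := hy
  have hyq : 1 ≤ ‖y‖ ^ q := Real.one_le_rpow h1y.le (by positivity)
  calc hlObj c d u0 x t y ≤ u0 y + B * ‖y‖ ^ q :=
        hlObj_le_of_norm_le hc ht hyx ((hR₀ x hx).trans hR₀y.le)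
    _ ≤ -(B + |L| + 1) * ‖y‖ ^ q + B * ‖y‖ ^ q := by
        gcongr
        exact hM y (hyx.trans (hKb x hx)) hMy.le
    _ = -((|L| + 1) * ‖y‖ ^ q) := by ring
    _ ≤ -(|L| + 1) := by nlinarith [abs_nonneg L]
    _ < L := by linarith [neg_abs_le L]
    _ ≤ hlObj c d u0 x t x := hL x hx

theorem bddAbove_hlSet (hc : 0 ≤ c) (ht : 0 < t) (hu : Continuous u0) (hdecay : DecayCond d u0)
    (x : Fin d → ℝ) : BddAbove (hlSet c d u0 x t) := by
  obtain ⟨R, hR⟩ := exists_hlObj_lt_of_isCompact hc ht hu hdecay isCompact_singleton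
  have hcont : Continuous (hlObj c d u0 x t) :=
    (continuous_hlObj hu).comp (Continuous.prodMk_right x)
  obtain ⟨B, hB⟩ := (isCompact_closedBall (0 : Fin d → ℝ) R).bddAbove_image hcont.continuousOn
  refine ⟨max B (hlObj c d u0 x t x), ?_⟩
  rintro _ ⟨y, hyx, rfl⟩
  by_cases hy : ‖y‖ ≤ R
  · exact le_max_of_le_left (hB (mem_image_of_mem _ (by simpa using hy)))
  · exact le_max_of_le_right (hR x rfl y hyx (not_le.1 hy)).le

theorem mem_hlI_iff {x y : Fin d → ℝ} (ht : t ≠ 0) (hbdd : BddAbove (hlSet c d u0 x t)) :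
    y ∈ hlI c d u0 x t ↔ y ≤ x ∧ ∀ z ≤ x, hlObj c d u0 x t z ≤ hlObj c d u0 x t y := by
  change y ≤ x ∧ hlu c d u0 x t = hlObj c d u0 x t y ↔ _
  rw [hlu, if_neg ht, hlSet_eq_image]
  refine and_congr_right fun hyx => ⟨fun h z hz => ?_, fun h => ?_⟩
  · exact h ▸ le_csSup hbdd (mem_image_of_mem _ hz)
  · exact IsGreatest.csSup_eq ⟨mem_image_of_mem _ hyx, forall_mem_image.2 h⟩

theorem forall_le_iff_forall_inf {α : Type*} [SemilatticeInf α] {x : α} {P : α → Prop} :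
    (∀ z ≤ x, P z) ↔ ∀ w, P (w ⊓ x) :=
  ⟨fun h _ => h _ inf_le_right, fun h z hz => inf_eq_left.2 hz ▸ h z⟩

theorem isClosed_graph_hlI (hc : 0 ≤ c) (ht : 0 < t) (hu : Continuous u0)
    (hdecay : DecayCond d u0) :
    IsClosed {p : (Fin d → ℝ) × (Fin d → ℝ) | p.2 ∈ hlI c d u0 p.1 t} := by
  have hF := continuous_hlObj (c := c) (t := t) hu
  have hgraph : {p : (Fin d → ℝ) × (Fin d → ℝ) | p.2 ∈ hlI c d u0 p.1 t} =
      {p | p.2 ≤ p.1} ∩ ⋂ w : Fin d → ℝ,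
        {p | hlObj c d u0 p.1 t (w ⊓ p.1) ≤ hlObj c d u0 p.1 t p.2} := by
    ext p
    simp only [mem_ofPred_eq, mem_inter_iff, mem_iInter,
      mem_hlI_iff ht.ne' (bddAbove_hlSet hc ht hu hdecay p.1), forall_le_iff_forall_inf]
  rw [hgraph]
  have hinf (w : Fin d → ℝ) : Continuous fun p : (Fin d → ℝ) × (Fin d → ℝ) => w ⊓ p.1 :=
    continuous_pi fun i => continuous_const.min ((continuous_apply i).comp continuous_fst)
  exact (isClosed_le continuous_snd continuous_fst).inter <| isClosed_iInter fun w =>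
    isClosed_le (hF.comp (continuous_fst.prodMk (hinf w))) hF

end

theorem compact_union_of_maximizers_general
    (d : ℕ) (c : ℝ) (hc : 0 < c)
    (u0 : (Fin d → ℝ) → ℝ) (hlip : LocallyLipschitz u0)
    (hdecay : DecayCond d u0)
    (t : ℝ) (ht : 0 < t) (K : Set (Fin d → ℝ)) (hK : IsCompact K) :
    IsCompact (⋃ x ∈ K, hlI c d u0 x t) := by
  have hu := hlip.continuous
  obtain ⟨R, hR⟩ := exists_hlObj_lt_of_isCompact hc.le ht hu hdecay hK
  have hbounded : ∀ x ∈ K, hlI c d u0 x t ⊆ closedBall 0 R := fun x hx y hy => by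
    rw [mem_hlI_iff ht.ne' (bddAbove_hlSet hc.le ht hu hdecay x)] at hy
    by_contra hyR
    rw [mem_closedBall_zero_iff, not_le] at hyR
    exact (hR x hx y hy.1 hyR).not_ge (hy.2 x le_rfl)
  have hunion : ⋃ x ∈ K, hlI c d u0 x t =
      Prod.snd '' (K ×ˢ closedBall 0 R ∩ {p | p.2 ∈ hlI c d u0 p.1 t}) := by
    ext y
    simp only [mem_iUnion, mem_image, mem_inter_iff, mem_prod, mem_ofPred_eq, Prod.exists,
      exists_prop]
    exact ⟨fun ⟨x, hx, hy⟩ => ⟨x, y, ⟨⟨hx, hbounded x hx hy⟩, hy⟩, rfl⟩,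
      fun ⟨x, _, ⟨⟨hx, _⟩, hy⟩, rfl⟩ => ⟨x, hx, hy⟩⟩
  rw [hunion]
  exact ((hK.prod (isCompact_closedBall 0 R)).inter_right
    (isClosed_graph_hlI hc.le ht hu hdecay)).image continuous_snd

/-- Lemma 6.1(a): for `t > 0` and compact `K ⊆ ℝ^d`, the union of the sets of
Hopf-Lax maximizers `⋃_{x∈K} I(x,t)` is compact. -/
theorem compact_union_of_maximizers
    (d : ℕ) (hd : 1 ≤ d) (c : ℝ) (hc : 0 < c)
    (u0 : (Fin d → ℝ) → ℝ) (hmono : Monotone u0) (hlip : LocallyLipschitz u0)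
    (hdecay : DecayCond d u0)
    (t : ℝ) (ht : 0 < t) (K : Set (Fin d → ℝ)) (hK : IsCompact K) :
    IsCompact (⋃ x ∈ K, hlI c d u0 x t) :=
  compact_union_of_maximizers_general d c hc u0 hlip hdecay t ht K hK
end

section
/- For every closed set B ⊆ ℝ^d and every t > 0, the set W(B,t) is closed in ℝ^d. (Lemma 6.1(b).) -/
open Set Metric

noncomputable section

/-- The forward set `W(y,t) = { x ≥ y : u(x,t) = u₀(y) + t g((x−y)/t) }`. -/
def hlW (c : ℝ) (d : ℕ) (u0 : (Fin d → ℝ) → ℝ) (y : Fin d → ℝ) (t : ℝ) :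
    Set (Fin d → ℝ) :=
  {x | y ≤ x ∧ hlu c d u0 x t = u0 y + t * gfun c d (t⁻¹ • (x - y))}

namespace HLaux

lemma gfun_zero {c : ℝ} {d : ℕ} (hd : 1 ≤ d) : gfun c d 0 = 0 := by
  have h1 : (∏ i : Fin d, (0:ℝ)) = 0 := by
    rw [Finset.prod_const]
    exact zero_pow (by simp; omega)
  have h2 : (((d:ℝ)+1)⁻¹ : ℝ) ≠ 0 := by positivity
  simp only [gfun, Pi.zero_apply, h1, Real.zero_rpow h2, mul_zero]

lemma gfun_cont {c : ℝ} {d : ℕ} : Continuous (gfun c d) := by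
  unfold gfun
  refine continuous_const.mul ?_
  refine Continuous.rpow_const (continuous_finset_prod _ (fun i _ => continuous_apply i)) ?_
  intro z; right; positivity

lemma gfun_le {c : ℝ} (hc : 0 ≤ c) {d : ℕ} {z : Fin d → ℝ} (hz : 0 ≤ z) :
    gfun c d z ≤ c * ‖z‖ ^ ((d : ℝ) * ((d:ℝ)+1)⁻¹) := by
  have hprod : (∏ i, z i) ≤ ‖z‖ ^ d := by
    calc (∏ i, z i) ≤ ∏ _i : Fin d, ‖z‖ := by
          refine Finset.prod_le_prod (fun i _ => hz i) (fun i _ => ?_)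
          exact (le_abs_self _).trans (by simpa [Real.norm_eq_abs] using norm_le_pi_norm z i)
      _ = ‖z‖ ^ d := by simp [Finset.prod_const]
  have hprod0 : (0:ℝ) ≤ ∏ i, z i := Finset.prod_nonneg (fun i _ => hz i)
  have he : (0:ℝ) ≤ ((d:ℝ)+1)⁻¹ := by positivity
  have h1 : (∏ i, z i) ^ (((d:ℝ)+1)⁻¹) ≤ (‖z‖ ^ d) ^ (((d:ℝ)+1)⁻¹) :=
    Real.rpow_le_rpow hprod0 hprod he
  have h2 : (‖z‖ ^ d : ℝ) ^ (((d:ℝ)+1)⁻¹) = ‖z‖ ^ ((d:ℝ) * ((d:ℝ)+1)⁻¹) := by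
    rw [← Real.rpow_natCast ‖z‖ d, ← Real.rpow_mul (norm_nonneg z)]
  exact mul_le_mul_of_nonneg_left (h2 ▸ h1) hc
    |>.trans_eq rfl

lemma term_le {c : ℝ} (hc : 0 ≤ c) {d : ℕ} {t : ℝ} (ht : 0 < t)
    {x y : Fin d → ℝ} (hyx : y ≤ x) :
    t * gfun c d (t⁻¹ • (x - y)) ≤
      (c * t * t⁻¹ ^ ((d:ℝ) * ((d:ℝ)+1)⁻¹)) * ‖x - y‖ ^ ((d:ℝ) * ((d:ℝ)+1)⁻¹) := by
  have hz : (0 : Fin d → ℝ) ≤ t⁻¹ • (x - y) := by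
    intro i
    have : 0 ≤ x i - y i := sub_nonneg.mpr (hyx i)
    simpa [Pi.smul_apply, smul_eq_mul] using mul_nonneg (inv_nonneg.mpr ht.le) this
  have h1 : gfun c d (t⁻¹ • (x - y)) ≤ c * ‖t⁻¹ • (x - y)‖ ^ ((d:ℝ) * ((d:ℝ)+1)⁻¹) :=
    gfun_le hc hz
  have hnorm : ‖t⁻¹ • (x - y)‖ = t⁻¹ * ‖x - y‖ := by
    rw [norm_smul, Real.norm_eq_abs, abs_of_pos (by positivity)]
  have h2 : ‖t⁻¹ • (x - y)‖ ^ ((d:ℝ) * ((d:ℝ)+1)⁻¹)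
      = t⁻¹ ^ ((d:ℝ) * ((d:ℝ)+1)⁻¹) * ‖x - y‖ ^ ((d:ℝ) * ((d:ℝ)+1)⁻¹) := by
    rw [hnorm, Real.mul_rpow (by positivity) (norm_nonneg _)]
  calc t * gfun c d (t⁻¹ • (x - y))
      ≤ t * (c * ‖t⁻¹ • (x - y)‖ ^ ((d:ℝ) * ((d:ℝ)+1)⁻¹)) :=
        mul_le_mul_of_nonneg_left h1 ht.le
    _ = (c * t * t⁻¹ ^ ((d:ℝ) * ((d:ℝ)+1)⁻¹)) * ‖x - y‖ ^ ((d:ℝ) * ((d:ℝ)+1)⁻¹) := by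
        rw [h2]; ring

lemma key {d : ℕ} (hd : 1 ≤ d) {c : ℝ} (hc : 0 < c) {u0 : (Fin d → ℝ) → ℝ}
    (hdecay : DecayCond d u0) {t : ℝ} (ht : 0 < t) (b : Fin d → ℝ) (K : ℝ) :
    ∃ R, 0 < R ∧ ∀ x y : Fin d → ℝ, y ≤ x → x ≤ b → R ≤ ‖y‖ →
      u0 y + t * gfun c d (t⁻¹ • (x - y)) < K := by
  have hd0 : (0:ℝ) < d := by exact_mod_cast hd
  set r : ℝ := (d:ℝ) * ((d:ℝ)+1)⁻¹ with hrdef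
  have hr0 : 0 < r := by positivity
  set A : ℝ := c * t * t⁻¹ ^ r with hA
  have hA0 : 0 ≤ A := by positivity
  obtain ⟨M, hM0, hM⟩ := hdecay b (A * 2 ^ r + 1)
  refine ⟨max (max M ‖b‖) ((1 + |K|) ^ r⁻¹), lt_max_of_lt_left (lt_max_of_lt_left hM0), ?_⟩
  intro x y hyx hxb hRy
  have hyM : M ≤ ‖y‖ := le_trans (le_max_of_le_left (le_max_left _ _)) hRy
  have hyb : ‖b‖ ≤ ‖y‖ := le_trans (le_max_of_le_left (le_max_right _ _)) hRy
  have hyK : (1 + |K|) ^ r⁻¹ ≤ ‖y‖ := le_trans (le_max_right _ _) hRy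
  have hdec : u0 y ≤ -(A * 2 ^ r + 1) * ‖y‖ ^ r := by
    have := hM y (hyx.trans hxb) hyM
    rwa [div_eq_mul_inv] at this
  have hxy : ‖x - y‖ ≤ ‖b‖ + ‖y‖ := by
    refine (pi_norm_le_iff_of_nonneg (by positivity)).mpr (fun i => ?_)
    have h1 : x i - y i ≤ b i - y i := by have := hxb i; linarith
    have h2 : b i - y i ≤ |b i| + |y i| := by
      have := abs_sub (b i) (y i); have := le_abs_self (b i - y i)
      have := abs_sub_abs_le_abs_sub (b i) (y i); calc
        b i - y i ≤ |b i - y i| := le_abs_self _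
        _ ≤ |b i| + |y i| := abs_sub _ _
    have hb : |b i| ≤ ‖b‖ := by simpa [Real.norm_eq_abs] using norm_le_pi_norm b i
    have hy : |y i| ≤ ‖y‖ := by simpa [Real.norm_eq_abs] using norm_le_pi_norm y i
    have h0 : 0 ≤ x i - y i := sub_nonneg.mpr (hyx i)
    rw [Pi.sub_apply, Real.norm_eq_abs, abs_of_nonneg h0]
    linarith
  have hxy2 : ‖x - y‖ ≤ 2 * ‖y‖ := by linarith
  have hterm : t * gfun c d (t⁻¹ • (x - y)) ≤ A * (2 ^ r * ‖y‖ ^ r) := by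
    refine (term_le hc.le ht hyx).trans ?_
    have h1 : ‖x - y‖ ^ r ≤ (2 * ‖y‖) ^ r :=
      Real.rpow_le_rpow (norm_nonneg _) hxy2 hr0.le
    have h2 : ((2:ℝ) * ‖y‖) ^ r = 2 ^ r * ‖y‖ ^ r :=
      Real.mul_rpow (by norm_num) (norm_nonneg _)
    exact mul_le_mul_of_nonneg_left (h1.trans_eq h2) hA0
  have hyr : 1 + |K| ≤ ‖y‖ ^ r := by
    have h0 : (0:ℝ) ≤ (1 + |K|) ^ r⁻¹ := by positivity
    have h1 : ((1 + |K|) ^ r⁻¹) ^ r ≤ ‖y‖ ^ r := Real.rpow_le_rpow h0 hyK hr0.le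
    have h2 : ((1 + |K|) ^ r⁻¹ : ℝ) ^ r = 1 + |K| := by
      rw [← Real.rpow_mul (by positivity), inv_mul_cancel₀ hr0.ne', Real.rpow_one]
    linarith [h2 ▸ h1]
  have habsK : -|K| ≤ K := neg_abs_le K
  nlinarith [hdec, hterm]

lemma bdd {d : ℕ} (hd : 1 ≤ d) {c : ℝ} (hc : 0 < c) {u0 : (Fin d → ℝ) → ℝ}
    (hmono : Monotone u0) (hdecay : DecayCond d u0) {t : ℝ} (ht : 0 < t)
    (x : Fin d → ℝ) : BddAbove (hlSet c d u0 x t) := by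
  set r : ℝ := (d:ℝ) * ((d:ℝ)+1)⁻¹ with hrdef
  have hd0 : (0:ℝ) < d := by exact_mod_cast hd
  have hr0 : 0 < r := by positivity
  set A : ℝ := c * t * t⁻¹ ^ r with hA
  have hA0 : 0 ≤ A := by positivity
  obtain ⟨R, hR0, hR⟩ := key hd hc hdecay ht x 0
  refine ⟨max 0 (u0 x + A * (‖x‖ + R) ^ r), ?_⟩
  rintro v ⟨y, hy, rfl⟩
  have hy' : y ≤ x := hy
  by_cases h : R ≤ ‖y‖
  · exact le_max_of_le_left (hR x y hy' le_rfl h).le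
  · push_neg at h
    refine le_max_of_le_right ?_
    have h1 : u0 y ≤ u0 x := hmono hy'
    have h2 := term_le hc.le ht hy'
    have h3 : ‖x - y‖ ^ r ≤ (‖x‖ + R) ^ r := by
      refine Real.rpow_le_rpow (norm_nonneg _) ?_ hr0.le
      calc ‖x - y‖ ≤ ‖x‖ + ‖y‖ := norm_sub_le _ _
        _ ≤ ‖x‖ + R := by linarith
    have h4 : t * gfun c d (t⁻¹ • (x - y)) ≤ A * (‖x‖ + R) ^ r :=
      h2.trans (mul_le_mul_of_nonneg_left h3 hA0)
    linarith

lemma self_le {d : ℕ} (hd : 1 ≤ d) {c : ℝ} (hc : 0 < c) {u0 : (Fin d → ℝ) → ℝ}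
    (hmono : Monotone u0) (hdecay : DecayCond d u0) {t : ℝ} (ht : 0 < t)
    (x : Fin d → ℝ) : u0 x ≤ hlu c d u0 x t := by
  rw [hlu, if_neg ht.ne']
  have hmem : u0 x ∈ hlSet c d u0 x t := by
    refine ⟨x, show x ≤ x from le_rfl, ?_⟩
    simp [sub_self, smul_zero, gfun_zero hd]
  exact le_csSup (bdd hd hc hmono hdecay ht x) hmem

end HLaux

open HLaux Filter Topology

set_option maxHeartbeats 1000000 in
/-- Lemma 6.1(b): for every closed set `B ⊆ ℝ^d` and `t > 0`,
the set `W(B,t) = ⋃_{y∈B} W(y,t)` is closed. -/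
theorem isClosed_W
    (d : ℕ) (hd : 1 ≤ d) (c : ℝ) (hc : 0 < c)
    (u0 : (Fin d → ℝ) → ℝ) (hmono : Monotone u0) (hlip : LocallyLipschitz u0)
    (hdecay : DecayCond d u0)
    (t : ℝ) (ht : 0 < t) (B : Set (Fin d → ℝ)) (hB : IsClosed B) :
    IsClosed (⋃ y ∈ B, hlW c d u0 y t) := by
  have hcont0 : Continuous u0 := hlip.continuous
  apply IsSeqClosed.isClosed
  intro xs x hmem hx
  have h' : ∀ n, ∃ y, y ∈ B ∧ xs n ∈ hlW c d u0 y t := by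
    intro n
    simpa [mem_iUnion] using hmem n
  choose ys hysB hysW using h'
  have hle : ∀ n, ys n ≤ xs n := fun n => (hysW n).1
  have heq : ∀ n, hlu c d u0 (xs n) t = u0 (ys n) + t * gfun c d (t⁻¹ • (xs n - ys n)) :=
    fun n => (hysW n).2
  -- eventual bounds
  have hcu : Tendsto (fun n => u0 (xs n)) atTop (𝓝 (u0 x)) := (hcont0.tendsto x).comp hx
  have hev1 : ∀ᶠ n in atTop, u0 x - 1 < u0 (xs n) :=
    hcu.eventually (eventually_gt_nhds (by linarith))
  have hev2 : ∀ᶠ n in atTop, xs n ≤ (fun i => x i + 1) := by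
    have hball := hx.eventually (Metric.closedBall_mem_nhds x one_pos)
    filter_upwards [hball] with n hn
    intro i
    have hdist : dist (xs n) x ≤ 1 := hn
    have h1 : |xs n i - x i| ≤ ‖xs n - x‖ := by
      simpa [Real.norm_eq_abs] using norm_le_pi_norm (xs n - x) i
    rw [dist_eq_norm] at hdist
    have := le_abs_self (xs n i - x i)
    simp only []
    linarith
  obtain ⟨N, hN⟩ := (hev1.and hev2).exists_forall_of_atTop
  set b : Fin d → ℝ := fun i => x i + 1 with hbdef
  obtain ⟨R, hR0, hR⟩ := key hd hc hdecay ht b (u0 x - 1)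
  have hybd : ∀ n, ‖ys (n + N)‖ ≤ R := by
    intro n
    by_contra hcon
    push_neg at hcon
    have h1 := hR (xs (n+N)) (ys (n+N)) (hle _) (hN (n+N) (by omega)).2 hcon.le
    have h2 : u0 x - 1 < u0 (xs (n+N)) := (hN (n+N) (by omega)).1
    have h3 : u0 (xs (n+N)) ≤ hlu c d u0 (xs (n+N)) t := self_le hd hc hmono hdecay ht _
    rw [heq (n+N)] at h3
    linarith
  obtain ⟨y₀, hy₀ball, φ, hφ, hyconv⟩ :=
    (isCompact_closedBall (0 : Fin d → ℝ) R).tendsto_subseq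
      (x := fun n => ys (n + N)) (fun n => mem_closedBall_zero_iff.mpr (hybd n))
  have hten : Tendsto (fun k => φ k + N) atTop atTop :=
    (tendsto_add_atTop_nat N).comp hφ.tendsto_atTop
  have hx' : Tendsto (fun k => xs (φ k + N)) atTop (𝓝 x) := hx.comp hten
  have hy' : Tendsto (fun k => ys (φ k + N)) atTop (𝓝 y₀) := hyconv
  have hy₀B : y₀ ∈ B := hB.mem_of_tendsto hy' (Eventually.of_forall fun k => hysB _)
  have hy₀x : y₀ ≤ x := by
    intro i
    have h1 : Tendsto (fun k => ys (φ k + N) i) atTop (𝓝 (y₀ i)) :=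
      ((continuous_apply i).tendsto _).comp hy'
    have h2 : Tendsto (fun k => xs (φ k + N) i) atTop (𝓝 (x i)) :=
      ((continuous_apply i).tendsto _).comp hx'
    exact le_of_tendsto_of_tendsto' h1 h2 (fun k => hle _ i)
  have hF : Tendsto (fun k => u0 (ys (φ k + N)) +
        t * gfun c d (t⁻¹ • (xs (φ k + N) - ys (φ k + N))))
      atTop (𝓝 (u0 y₀ + t * gfun c d (t⁻¹ • (x - y₀)))) := by
    refine Tendsto.add ((hcont0.tendsto _).comp hy') ?_
    refine Tendsto.const_mul _ ?_
    exact (gfun_cont.tendsto _).comp ((hx'.sub hy').const_smul t⁻¹)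
  have hU : Tendsto (fun k => hlu c d u0 (xs (φ k + N)) t) atTop
      (𝓝 (u0 y₀ + t * gfun c d (t⁻¹ • (x - y₀)))) :=
    hF.congr (fun k => (heq _).symm)
  have hne : (hlSet c d u0 x t).Nonempty := ⟨_, x, show x ≤ x from le_rfl, rfl⟩
  have hval : hlu c d u0 x t = u0 y₀ + t * gfun c d (t⁻¹ • (x - y₀)) := by
    rw [hlu, if_neg ht.ne']
    refine le_antisymm ?_ ?_
    · refine csSup_le hne ?_
      rintro v ⟨z, hz, rfl⟩
      have hz' : z ≤ x := hz
      have hstep : ∀ k, u0 (z + (xs (φ k + N) - x)) + t * gfun c d (t⁻¹ • (x - z))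
          ≤ hlu c d u0 (xs (φ k + N)) t := by
        intro k
        rw [hlu, if_neg ht.ne']
        refine le_csSup (bdd hd hc hmono hdecay ht _) ?_
        refine ⟨z + (xs (φ k + N) - x), ?_, ?_⟩
        · intro i
          simp only [Pi.add_apply, Pi.sub_apply]
          linarith [hz' i]
        · have harg : xs (φ k + N) - (z + (xs (φ k + N) - x)) = x - z := by
            ext i; simp only [Pi.sub_apply, Pi.add_apply]; ring
          simp only [harg]
      have hzlim : Tendsto (fun k => u0 (z + (xs (φ k + N) - x)) +
            t * gfun c d (t⁻¹ • (x - z)))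
          atTop (𝓝 (u0 z + t * gfun c d (t⁻¹ • (x - z)))) := by
        refine Tendsto.add ?_ tendsto_const_nhds
        refine (hcont0.tendsto _).comp ?_
        have h5 : Tendsto (fun k => z + (xs (φ k + N) - x)) atTop (𝓝 (z + (x - x))) :=
          tendsto_const_nhds.add (hx'.sub tendsto_const_nhds)
        simpa using h5
      exact le_of_tendsto_of_tendsto' hzlim hU hstep
    · exact le_csSup (bdd hd hc hmono hdecay ht x)
        ⟨y₀, show y₀ ≤ x from hy₀x, rfl⟩
  exact mem_biUnion hy₀B ⟨hy₀x, hval⟩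

end
end

section
/- For every σ ∈ Σ and every cube K = [−q1, q1] (q > 0), the Lebesgue outer measure of the jump-rate set S_K(σ) satisfies |S_K(σ)| ≤ 2^{d+1}·ψ_K(σ). (Lemma 7.2.) -/
open Set MeasureTheory

open scoped Classical

noncomputable section

/-- `ℤ* = ℤ ∪ {±∞}`. -/
abbrev ZStar := WithBot (WithTop ℤ)

/-- Condition (ii): on each cube `[−q1, q1]` there are finite coordinate partitions
such that `σ` is constant on each left-closed right-open partition rectangle. -/
def StepStructure (d : ℕ) (σ : (Fin d → ℝ) → ZStar) : Prop :=
  ∀ q : ℝ, 0 < q →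
    ∃ (m : Fin d → ℕ) (s : Fin d → ℕ → ℝ),
      (∀ i, s i 0 = -q ∧ s i (m i) = q ∧ ∀ j, j < m i → s i j < s i (j + 1)) ∧
      (∀ κ : Fin d → ℕ, (∀ i, κ i < m i) →
        ∀ x y : Fin d → ℝ,
          (∀ i, s i (κ i) ≤ x i ∧ x i < s i (κ i + 1)) →
          (∀ i, s i (κ i) ≤ y i ∧ y i < s i (κ i + 1)) →
          σ x = σ y)

/-- Condition (iii): decay at `−∞`:
for every `b`, `lim_{M→∞} sup { |y|_∞^{-d/(d+1)} σ(y) : y ≤ b, |y|_∞ ≥ M } = −∞`. -/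
def DecayZ (d : ℕ) (σ : (Fin d → ℝ) → ZStar) : Prop :=
  ∀ b : Fin d → ℝ, ∀ C : ℝ, ∃ M : ℝ, 0 < M ∧ ∀ y : Fin d → ℝ, y ≤ b → M ≤ ‖y‖ →
    σ y ≤ (((⌊-C * ‖y‖ ^ ((d : ℝ) / ((d : ℝ) + 1))⌋ : ℤ) : WithTop ℤ) : ZStar)

/-- Membership in the state space `Σ`: monotone, locally a step function, decaying
to `−∞` at `−∞`. -/
def InSigma (d : ℕ) (σ : (Fin d → ℝ) → ZStar) : Prop :=
  Monotone σ ∧ StepStructure d σ ∧ DecayZ d σ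

/-- The jump set `S_x(σ) = {y ≤ x : σ(y) = σ(x)}` when `σ(x)` is finite, `∅` otherwise. -/
def Sx (d : ℕ) (σ : (Fin d → ℝ) → ZStar) (x : Fin d → ℝ) : Set (Fin d → ℝ) :=
  if σ x ≠ ⊥ ∧ σ x ≠ ⊤ then {y | y ≤ x ∧ σ y = σ x} else ∅

/-- `y^{b,h}(σ)`: the coordinatewise maximal `y ≤ b` such that `[y,b]` contains
`{x ≤ b : σ(x) ≥ h}` (equal to `b` if that set is empty). -/
def ybh (d : ℕ) (σ : (Fin d → ℝ) → ZStar) (b : Fin d → ℝ) (h : ℤ) : Fin d → ℝ :=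
  if ({x : Fin d → ℝ | x ≤ b ∧ (((h : WithTop ℤ) : ZStar)) ≤ σ x}).Nonempty then
    fun i => min (b i)
      (sInf ((fun x => x i) '' {x : Fin d → ℝ | x ≤ b ∧ (((h : WithTop ℤ) : ZStar)) ≤ σ x}))
  else b

/-- `λ_k(σ) = sup_{h ≤ k−2} (q·1 − y^h)! (k−h)^{−(d+1)}`. -/
def lamK (d : ℕ) (σ : (Fin d → ℝ) → ZStar) (q : ℝ) (k : ℤ) : ℝ :=
  sSup {v : ℝ | ∃ h : ℤ, h ≤ k - 2 ∧
    v = (∏ i, (q - ybh d σ (fun _ => q) h i)) / ((k - h : ℤ) : ℝ) ^ (d + 1)}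

/-- The set of finite values of `σ` on the cube `K = [−q1, q1]`. -/
def finVals (d : ℕ) (σ : (Fin d → ℝ) → ZStar) (q : ℝ) : Set ℤ :=
  {n : ℤ | ∃ x : Fin d → ℝ, x ∈ Set.Icc (fun _ => -q) (fun _ => q) ∧
    σ x = ((n : WithTop ℤ) : ZStar)}

/-- `ψ_K(σ) = ( ∑_{k=I(K,σ)+1}^{J(K,σ)+1} λ_k(σ)² )^{1/2}`, with `ψ_K(σ) = 0` when `σ`
takes no finite value on `K`. Here `I(K,σ)` and `J(K,σ)` are the minimal and maximal
finite values of `σ` on `K`. -/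
def psiK (d : ℕ) (σ : (Fin d → ℝ) → ZStar) (q : ℝ) : ℝ :=
  if (finVals d σ q).Nonempty then
    Real.sqrt (∑ k ∈ Finset.Icc (sInf (finVals d σ q) + 1) (sSup (finVals d σ q) + 1),
      (lamK d σ q k) ^ 2)
  else 0

/-!
Every point `y` of `S_K(σ)` satisfies `y ≤ q1` and `σ(y) ≥ I(K,σ)`, so `S_K(σ)` lies in the
box `[y^{I-1}, q1]`. Its volume `(q1 - y^{I-1})!` is, up to the factor `2^{d+1}`, the `h = k - 2`
term of `λ_k` for `k = I + 1`, and `λ_{I+1} ≤ ψ_K(σ)` because `λ_{I+1}²` is one of the summands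
of `ψ_K(σ)²`. The decay condition (iii) only enters to make `λ_k` a genuine supremum: it bounds
`|y|_∞` on `{y ≤ q1 : σ(y) ≥ h}` by `M + |h|^{(d+1)/d}`, so `(q1 - y^h)!` grows at most like
`|h|^{d+1}`. The step structure (ii) makes the range of `σ` on `K` finite, so that `I` and `J`
exist.
-/

lemma exists_eq_coe_of_ne_bot_of_ne_top {a : ZStar} (h₁ : a ≠ ⊥) (h₂ : a ≠ ⊤) :
    ∃ n : ℤ, a = ((n : WithTop ℤ) : ZStar) := by
  obtain ⟨b, rfl⟩ := WithBot.ne_bot_iff_exists.mp h₁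
  have hb : b ≠ ⊤ := by rintro rfl; exact h₂ rfl
  obtain ⟨n, rfl⟩ := WithTop.ne_top_iff_exists.mp hb
  exact ⟨n, rfl⟩

lemma exists_mem_Ico_of_mem_Ico {s : ℕ → ℝ} {t : ℝ} :
    ∀ {m : ℕ}, s 0 ≤ t → t < s m → ∃ j < m, s j ≤ t ∧ t < s (j + 1)
  | 0, h₀, hm => absurd (h₀.trans_lt hm) (lt_irrefl _)
  | m + 1, h₀, hm => by
    by_cases ht : t < s m
    · obtain ⟨j, hj, hjt⟩ := exists_mem_Ico_of_mem_Ico h₀ ht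
      exact ⟨j, by omega, hjt⟩
    · exact ⟨m, by omega, not_lt.mp ht, hm⟩

lemma Real.rpow_succ_div_self_pow {x : ℝ} (hx : 0 ≤ x) {d : ℕ} (hd : d ≠ 0) :
    (x ^ (((d : ℝ) + 1) / d)) ^ d = x ^ (d + 1) := by
  rw [← Real.rpow_mul_natCast hx, div_mul_cancel₀ _ (Nat.cast_ne_zero.mpr hd)]
  exact_mod_cast Real.rpow_natCast x (d + 1)

lemma bddAbove_div_pow_of_le {f : ℤ → ℝ} {A : ℝ} (hA : 0 ≤ A) {n : ℕ}
    (hf : ∀ h, f h ≤ A * (1 + |(h : ℝ)|) ^ n) (k : ℤ) :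
    BddAbove {v : ℝ | ∃ h : ℤ, h ≤ k - 2 ∧ v = f h / ((k - h : ℤ) : ℝ) ^ n} := by
  refine ⟨A * (2 + |(k : ℝ)|) ^ n, ?_⟩
  rintro _ ⟨h, hhk, rfl⟩
  have hkh : (2 : ℝ) ≤ ((k - h : ℤ) : ℝ) := by exact_mod_cast (by omega : (2 : ℤ) ≤ k - h)
  have hgrowth : 1 + |(h : ℝ)| ≤ (2 + |(k : ℝ)|) * ((k - h : ℤ) : ℝ) := by
    have hhk' : |(h : ℝ)| ≤ |(k : ℝ)| + ((k - h : ℤ) : ℝ) := by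
      push_cast
      linarith [abs_sub_abs_le_abs_sub (h : ℝ) k, abs_sub_comm (h : ℝ) k,
        abs_of_pos (by push_cast at hkh; linarith : (0 : ℝ) < k - h)]
    nlinarith [abs_nonneg (k : ℝ)]
  rw [div_le_iff₀ (by positivity)]
  calc f h ≤ A * (1 + |(h : ℝ)|) ^ n := hf h
    _ ≤ A * ((2 + |(k : ℝ)|) * ((k - h : ℤ) : ℝ)) ^ n := by gcongr
    _ = A * (2 + |(k : ℝ)|) ^ n * ((k - h : ℤ) : ℝ) ^ n := by rw [mul_pow, mul_assoc]

variable {d : ℕ} {σ : (Fin d → ℝ) → ZStar}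

lemma iUnion_Sx_subset (q : ℝ) :
    (⋃ x ∈ Icc (fun _ => -q : Fin d → ℝ) (fun _ => q), Sx d σ x) ⊆
      {y | y ≤ (fun _ => q) ∧ ∃ n ∈ finVals d σ q, σ y = ((n : WithTop ℤ) : ZStar)} := by
  intro y hy
  obtain ⟨x, hxK, hy⟩ := mem_iUnion₂.mp hy
  unfold Sx at hy
  split_ifs at hy with hfin
  · obtain ⟨n, hn⟩ := exists_eq_coe_of_ne_bot_of_ne_top hfin.1 hfin.2
    exact ⟨hy.1.trans hxK.2, n, ⟨x, hxK, hn⟩, hy.2.trans hn⟩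
  · exact absurd hy (notMem_empty y)

lemma iUnion_Sx_eq_empty {q : ℝ} (hempty : finVals d σ q = ∅) :
    (⋃ x ∈ Icc (fun _ => -q : Fin d → ℝ) (fun _ => q), Sx d σ x) = ∅ :=
  eq_empty_of_forall_notMem fun _ hy => by
    obtain ⟨-, n, hn, -⟩ := iUnion_Sx_subset q hy
    simp [hempty] at hn

lemma StepStructure.finite_finVals (hσ : StepStructure d σ) {q : ℝ} (hq : 0 < q) :
    (finVals d σ q).Finite := by
  obtain ⟨m, s, hs, hconst⟩ := hσ (2 * q) (by linarith)
  set corners : Set (Fin d → ℕ) := univ.pi fun i => Iio (m i)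
  have hcell : ∀ x ∈ Icc (fun _ => -q : Fin d → ℝ) (fun _ => q),
      ∃ κ ∈ corners, σ x = σ fun i => s i (κ i) := by
    intro x hx
    have hloc : ∀ i, ∃ j < m i, s i j ≤ x i ∧ x i < s i (j + 1) := fun i =>
      exists_mem_Ico_of_mem_Ico (by rw [(hs i).1]; linarith [hx.1 i])
        (by rw [(hs i).2.1]; linarith [hx.2 i])
    choose κ hκm hκ using hloc
    exact ⟨κ, fun i _ => hκm i,
      hconst κ hκm x _ hκ fun i => ⟨le_rfl, (hs i).2.2 _ (hκm i)⟩⟩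
  have hcoe : Function.Injective fun n : ℤ => ((n : WithTop ℤ) : ZStar) :=
    WithBot.coe_injective.comp WithTop.coe_injective
  refine ((Set.Finite.pi fun i => finite_Iio (m i)).image
    (fun κ => σ fun i => s i (κ i))).preimage hcoe.injOn |>.subset ?_
  rintro n ⟨x, hx, hn⟩
  obtain ⟨κ, hκ, hxκ⟩ := hcell x hx
  exact ⟨κ, hκ, hxκ.symm.trans hn⟩

section ybh

variable {b : Fin d → ℝ} {h : ℤ}

lemma ybh_le : ybh d σ b h ≤ b := by
  intro i
  unfold ybh
  split_ifs
  · exact min_le_left _ _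
  · exact le_rfl

variable {L : ℝ} (hL : ∀ z, z ≤ b → ((h : WithTop ℤ) : ZStar) ≤ σ z → ∀ i, L ≤ z i)
include hL

lemma ybh_le_of_le {z : Fin d → ℝ} (hzb : z ≤ b) (hz : ((h : WithTop ℤ) : ZStar) ≤ σ z) :
    ybh d σ b h ≤ z := by
  intro i
  unfold ybh
  rw [if_pos ⟨z, hzb, hz⟩]
  refine (min_le_right _ _).trans (csInf_le ⟨L, ?_⟩ ⟨z, ⟨hzb, hz⟩, rfl⟩)
  rintro _ ⟨x, hx, rfl⟩
  exact hL x hx.1 hx.2 i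

lemma le_ybh (hLb : ∀ i, L ≤ b i) (i : Fin d) : L ≤ ybh d σ b h i := by
  unfold ybh
  split_ifs with hne
  · refine le_min (hLb i) (le_csInf (hne.image _) ?_)
    rintro _ ⟨x, hx, rfl⟩
    exact hL x hx.1 hx.2 i
  · exact hLb i

end ybh

lemma volume_Icc_ybh (b : Fin d → ℝ) (h : ℤ) :
    volume (Icc (ybh d σ b h) b) = ENNReal.ofReal (∏ i, (b i - ybh d σ b h i)) := by
  rw [Real.volume_Icc_pi]
  exact (ENNReal.ofReal_prod_of_nonneg fun i _ => sub_nonneg.mpr (ybh_le i)).symm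

namespace DecayZ

variable (hd : 1 ≤ d) (hσ : DecayZ d σ)
include hd hσ

lemma exists_forall_le_apply (b : Fin d → ℝ) :
    ∃ M : ℝ, 0 < M ∧ ∀ (h : ℤ) (z : Fin d → ℝ), z ≤ b →
      ((h : WithTop ℤ) : ZStar) ≤ σ z → ∀ i, -(M + |(h : ℝ)| ^ (((d : ℝ) + 1) / d)) ≤ z i := by
  obtain ⟨M, hM, hdecay⟩ := hσ b 1
  refine ⟨M, hM, fun h z hzb hz i => neg_le_of_abs_le ((norm_le_pi_norm z i).trans ?_)⟩
  have hpow : 0 ≤ |(h : ℝ)| ^ (((d : ℝ) + 1) / d) := by positivity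
  rcases lt_or_ge ‖z‖ M with hlt | hle
  · linarith
  have hfloor : h ≤ ⌊-1 * ‖z‖ ^ ((d : ℝ) / (d + 1))⌋ := by
    exact_mod_cast hz.trans (hdecay z hzb hle)
  have hroot : ‖z‖ ^ ((d : ℝ) / (d + 1)) ≤ |(h : ℝ)| := by
    linarith [Int.le_floor.mp hfloor, neg_abs_le (h : ℝ)]
  have hd' : (0 : ℝ) < d := by exact_mod_cast hd
  have : ‖z‖ ≤ |(h : ℝ)| ^ (((d : ℝ) + 1) / d) := by
    rw [← inv_div]
    exact (Real.le_rpow_inv_iff_of_pos (norm_nonneg _) (abs_nonneg _) (by positivity)).mpr hroot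
  linarith

lemma ybh_le_of_le {b z : Fin d → ℝ} {h : ℤ} (hzb : z ≤ b)
    (hz : ((h : WithTop ℤ) : ZStar) ≤ σ z) : ybh d σ b h ≤ z := by
  obtain ⟨M, -, hcoord⟩ := hσ.exists_forall_le_apply hd b
  exact _root_.ybh_le_of_le (hcoord h) hzb hz

lemma iUnion_Sx_subset_Icc_ybh {q : ℝ} (hbdd : BddBelow (finVals d σ q)) :
    (⋃ x ∈ Icc (fun _ => -q : Fin d → ℝ) (fun _ => q), Sx d σ x) ⊆
      Icc (ybh d σ (fun _ => q) (sInf (finVals d σ q) - 1)) (fun _ => q) := by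
  intro y hy
  obtain ⟨hyq, n, hn, hyn⟩ := iUnion_Sx_subset q hy
  have hIn : sInf (finVals d σ q) - 1 ≤ n := by linarith [csInf_le hbdd hn]
  exact ⟨hσ.ybh_le_of_le hd hyq (by rw [hyn]; exact_mod_cast hIn), hyq⟩

lemma exists_prod_sub_ybh_le {q : ℝ} (hq : 0 < q) :
    ∃ A : ℝ, 0 ≤ A ∧ ∀ h : ℤ,
      ∏ i, (q - ybh d σ (fun _ => q) h i) ≤ A * (1 + |(h : ℝ)|) ^ (d + 1) := by
  obtain ⟨M, hM, hcoord⟩ := hσ.exists_forall_le_apply hd fun _ => q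
  set p : ℝ := ((d : ℝ) + 1) / d
  refine ⟨(q + M + 1) ^ d, by positivity, fun h => ?_⟩
  have hfactor : ∀ i, q - ybh d σ (fun _ => q) h i ≤ (q + M + 1) * (1 + |(h : ℝ)|) ^ p := by
    intro i
    have hpow : 0 ≤ |(h : ℝ)| ^ p := by positivity
    have hlow := le_ybh (hcoord h) (fun _ => by linarith) i
    have hmono : |(h : ℝ)| ^ p ≤ (1 + |(h : ℝ)|) ^ p :=
      Real.rpow_le_rpow (abs_nonneg _) (by linarith) (by positivity)
    have hone : 1 ≤ (1 + |(h : ℝ)|) ^ p :=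
      Real.one_le_rpow (by linarith [abs_nonneg (h : ℝ)]) (by positivity)
    nlinarith
  calc ∏ i, (q - ybh d σ (fun _ => q) h i)
      ≤ ∏ _i : Fin d, (q + M + 1) * (1 + |(h : ℝ)|) ^ p :=
        Finset.prod_le_prod (fun i _ => sub_nonneg.mpr (ybh_le i)) fun i _ => hfactor i
    _ = (q + M + 1) ^ d * (1 + |(h : ℝ)|) ^ (d + 1) := by
        rw [Finset.prod_const, Finset.card_univ, Fintype.card_fin, mul_pow,
          Real.rpow_succ_div_self_pow (by positivity) (by omega)]

lemma prod_sub_ybh_le_two_pow_mul_lamK {q : ℝ} (hq : 0 < q) (h : ℤ) :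
    ∏ i, (q - ybh d σ (fun _ => q) h i) ≤ 2 ^ (d + 1) * lamK d σ q (h + 2) := by
  obtain ⟨A, hA, hgrowth⟩ := hσ.exists_prod_sub_ybh_le hd hq
  have hterm := le_csSup (bddAbove_div_pow_of_le
    (f := fun h => ∏ i, (q - ybh d σ (fun _ => q) h i)) hA hgrowth (h + 2)) ⟨h, by omega, rfl⟩
  rw [show ((h + 2 - h : ℤ) : ℝ) = 2 by push_cast; ring, div_le_iff₀ (by positivity)] at hterm
  rw [mul_comm]
  exact hterm

end DecayZ

lemma lamK_le_psiK {q : ℝ} (hne : (finVals d σ q).Nonempty) {k : ℤ}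
    (hk : k ∈ Finset.Icc (sInf (finVals d σ q) + 1) (sSup (finVals d σ q) + 1)) :
    lamK d σ q k ≤ psiK d σ q := by
  rw [psiK, if_pos hne]
  exact (le_abs_self _).trans <| Real.abs_le_sqrt <|
    Finset.single_le_sum (f := fun k => lamK d σ q k ^ 2) (fun _ _ => sq_nonneg _) hk

/-- Lemma 7.2: for `σ ∈ Σ` and the cube `K = [−q1, q1]`, the Lebesgue (outer) measure
of `S_K(σ) = ⋃_{x∈K} S_x(σ)` satisfies `|S_K(σ)| ≤ 2^{d+1} ψ_K(σ)`. -/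
theorem volume_SK_le
    (d : ℕ) (hd : 1 ≤ d) (σ : (Fin d → ℝ) → ZStar) (hσ : InSigma d σ)
    (q : ℝ) (hq : 0 < q) :
    volume (⋃ x ∈ Set.Icc (fun _ => -q : Fin d → ℝ) (fun _ => q : Fin d → ℝ), Sx d σ x) ≤
      ENNReal.ofReal (2 ^ (d + 1) * psiK d σ q) := by
  obtain ⟨-, hstep, hdecay⟩ := hσ
  rcases (finVals d σ q).eq_empty_or_nonempty with hempty | hne
  · rw [iUnion_Sx_eq_empty hempty, measure_empty]
    exact zero_le
  have hfin := hstep.finite_finVals hq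
  set I := sInf (finVals d σ q)
  have hI : I - 1 + 2 ∈ Finset.Icc (I + 1) (sSup (finVals d σ q) + 1) :=
    Finset.mem_Icc.mpr ⟨by omega, by linarith [csInf_le_csSup hne hfin.bddBelow hfin.bddAbove]⟩
  calc volume (⋃ x ∈ Icc (fun _ => -q : Fin d → ℝ) (fun _ => q), Sx d σ x)
      ≤ volume (Icc (ybh d σ (fun _ => q) (I - 1)) (fun _ => q)) :=
        measure_mono (hdecay.iUnion_Sx_subset_Icc_ybh hd hfin.bddBelow)
    _ = ENNReal.ofReal (∏ i, (q - ybh d σ (fun _ => q) (I - 1) i)) := volume_Icc_ybh _ _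
    _ ≤ ENNReal.ofReal (2 ^ (d + 1) * lamK d σ q (I - 1 + 2)) := by
        gcongr
        exact hdecay.prod_sub_ybh_le_two_pow_mul_lamK hd hq _
    _ ≤ ENNReal.ofReal (2 ^ (d + 1) * psiK d σ q) := by
        gcongr
        exact lamK_le_psiK hne hI

end
end

section
/- Fix a positive integer h and suppose σ_0(y) ≤ ζ_0(y) ≤ σ_0(y) + h for all y ∈ ℝ^d. Then σ_T(x) ≤ ζ_T(x) ≤ σ_T(x) + h for all x ∈ ℝ^d. Moreover, defining A_0 = { y : σ_0(y) ∈ ℤ and ζ_0(y) = σ_0(y) + h } and A_T = { x : σ_T(x) ∈ ℤ and ζ_T(x) = σ_T(x) + h }, one has A_T = { x : σ_T(x) has a maximizer y with y ∈ A_0 }. (Lemma 9.1(b), stated pathwise.) -/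
open Set

noncomputable section

/-- `y` is a maximizer for `σT(x) = sup_{y ≤ x} (σ0(y) + T(y,x))`. -/
def IsMaximizer {d : ℕ} (σ0 σT : (Fin d → ℝ) → WithBot ℤ)
    (T : (Fin d → ℝ) → (Fin d → ℝ) → ℕ) (x y : Fin d → ℝ) : Prop :=
  y ≤ x ∧ σT x = σ0 y + (T y x : WithBot ℤ)

/-- `σT` is the (finite-valued) supremum `σT(x) = sup_{y ≤ x} (σ0(y) + T(y,x))`,
and a maximizer exists whenever `σT(x) > −∞`. -/
def IsSupProcess {d : ℕ} (σ0 σT : (Fin d → ℝ) → WithBot ℤ)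
    (T : (Fin d → ℝ) → (Fin d → ℝ) → ℕ) : Prop :=
  (∀ x y : Fin d → ℝ, y ≤ x → σ0 y + (T y x : WithBot ℤ) ≤ σT x) ∧
  (∀ (x : Fin d → ℝ) (b : WithBot ℤ),
      (∀ y : Fin d → ℝ, y ≤ x → σ0 y + (T y x : WithBot ℤ) ≤ b) → σT x ≤ b) ∧
  (∀ x : Fin d → ℝ, σT x ≠ ⊥ → ∃ y : Fin d → ℝ, IsMaximizer σ0 σT T x y)

/-! Both directions of the defect-set identity come from one chain of inequalities. If `y`
is a maximizer for `ζT(x)`, then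
`ζT(x) = ζ0(y) + T(y,x) ≤ σ0(y) + h + T(y,x) ≤ σT(x) + h`,
so `ζT(x) = σT(x) + h` forces equality at both steps: `y` maximizes `σT(x)` and `y ∈ A_0`.
Conversely, a maximizer `y ∈ A_0` of `σT(x)` gives `σT(x) + h = ζ0(y) + T(y,x) ≤ ζT(x)`. -/

namespace IsSupProcess

variable {d : ℕ} {T : (Fin d → ℝ) → (Fin d → ℝ) → ℕ} {σ0 σT ζ0 ζT : (Fin d → ℝ) → WithBot ℤ}
  {x y : Fin d → ℝ}

theorem add_le (hσ : IsSupProcess σ0 σT T) (hyx : y ≤ x) :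
    σ0 y + (T y x : WithBot ℤ) ≤ σT x :=
  hσ.1 x y hyx

theorem le_of_forall_add_le (hσ : IsSupProcess σ0 σT T) {b : WithBot ℤ}
    (hb : ∀ y, y ≤ x → σ0 y + (T y x : WithBot ℤ) ≤ b) : σT x ≤ b :=
  hσ.2.1 x b hb

theorem exists_isMaximizer (hσ : IsSupProcess σ0 σT T) (hx : σT x ≠ ⊥) :
    ∃ y, IsMaximizer σ0 σT T x y :=
  hσ.2.2 x hx

theorem mono (hσ : IsSupProcess σ0 σT T) (hζ : IsSupProcess ζ0 ζT T)
    (h0 : ∀ y, σ0 y ≤ ζ0 y) (x : Fin d → ℝ) : σT x ≤ ζT x :=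
  hσ.le_of_forall_add_le fun y hyx => (add_le_add_left (h0 y) _).trans (hζ.add_le hyx)

theorem le_add_of_le_add (hσ : IsSupProcess σ0 σT T) (hζ : IsSupProcess ζ0 ζT T)
    {c : WithBot ℤ} (h0 : ∀ y, ζ0 y ≤ σ0 y + c) (x : Fin d → ℝ) : ζT x ≤ σT x + c :=
  hζ.le_of_forall_add_le fun y hyx =>
    calc ζ0 y + (T y x : WithBot ℤ)
        ≤ σ0 y + c + T y x := add_le_add_left (h0 y) _
      _ = σ0 y + T y x + c := add_right_comm _ _ _
      _ ≤ σT x + c := add_le_add_left (hσ.add_le hyx) _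

theorem eq_add_of_isMaximizer (hσ : IsSupProcess σ0 σT T) (hζ : IsSupProcess ζ0 ζT T)
    {c : WithBot ℤ} (h0 : ∀ y, ζ0 y ≤ σ0 y + c) (hy : IsMaximizer σ0 σT T x y)
    (hζy : ζ0 y = σ0 y + c) : ζT x = σT x + c := by
  obtain ⟨hyx, hσx⟩ := hy
  refine (le_add_of_le_add hσ hζ h0 x).antisymm ?_
  calc σT x + c
      = σ0 y + c + T y x := by rw [hσx, add_right_comm]
    _ = ζ0 y + T y x := by rw [hζy]
    _ ≤ ζT x := hζ.add_le hyx

theorem exists_isMaximizer_of_eq_add (hσ : IsSupProcess σ0 σT T) (hζ : IsSupProcess ζ0 ζT T)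
    {c : WithBot ℤ} (hc : c ≠ ⊥) (h0 : ∀ y, ζ0 y ≤ σ0 y + c) (hσx : σT x ≠ ⊥)
    (hζx : ζT x = σT x + c) :
    ∃ y, IsMaximizer σ0 σT T x y ∧ σ0 y ≠ ⊥ ∧ ζ0 y = σ0 y + c := by
  obtain ⟨y, hyx, hζy⟩ := hζ.exists_isMaximizer (x := x) (by simp [hζx, hσx, hc])
  have hT : (T y x : WithBot ℤ) ≠ ⊥ := WithBot.natCast_ne_bot _
  have hσy : σT x = σ0 y + T y x := by
    refine le_antisymm ((WithBot.add_le_add_iff_right hc).mp ?_) (hσ.add_le hyx)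
    calc σT x + c
        = ζ0 y + T y x := hζx.symm.trans hζy
      _ ≤ σ0 y + c + T y x := add_le_add_left (h0 y) _
      _ = σ0 y + T y x + c := add_right_comm _ _ _
  refine ⟨y, ⟨hyx, hσy⟩, fun hbot => hσx (by simp [hσy, hbot]), WithBot.add_right_cancel hT ?_⟩
  calc ζ0 y + T y x
      = σT x + c := hζy.symm.trans hζx
    _ = σ0 y + c + T y x := by rw [hσy, add_right_comm]

end IsSupProcess

theorem coupling_defect_set_general
    (d : ℕ)
    (T : (Fin d → ℝ) → (Fin d → ℝ) → ℕ)
    (σ0 σT ζ0 ζT : (Fin d → ℝ) → WithBot ℤ)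
    (hσ : IsSupProcess σ0 σT T) (hζ : IsSupProcess ζ0 ζT T)
    (h : ℕ)
    (hcoup : ∀ y : Fin d → ℝ, σ0 y ≤ ζ0 y ∧ ζ0 y ≤ σ0 y + (h : WithBot ℤ)) :
    (∀ x : Fin d → ℝ, σT x ≤ ζT x ∧ ζT x ≤ σT x + (h : WithBot ℤ)) ∧
    (∀ x : Fin d → ℝ,
        (σT x ≠ ⊥ ∧ ζT x = σT x + (h : WithBot ℤ)) ↔
        ∃ y : Fin d → ℝ, IsMaximizer σ0 σT T x y ∧
          σ0 y ≠ ⊥ ∧ ζ0 y = σ0 y + (h : WithBot ℤ)) := by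
  have hupper : ∀ y, ζ0 y ≤ σ0 y + (h : WithBot ℤ) := fun y => (hcoup y).2
  refine ⟨fun x => ⟨hσ.mono hζ (fun y => (hcoup y).1) x, hσ.le_add_of_le_add hζ hupper x⟩,
    fun x => ⟨fun ⟨hσx, hζx⟩ => ?_, fun ⟨y, hy, hσy, hζy⟩ => ?_⟩⟩
  · exact hσ.exists_isMaximizer_of_eq_add hζ (WithBot.natCast_ne_bot h) hupper hσx hζx
  · refine ⟨fun hbot => hσy ?_, hσ.eq_add_of_isMaximizer hζ hupper hy hζy⟩
    simpa [hy.2] using hbot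

/-- Lemma 9.1(b), pathwise. If `σ0 ≤ ζ0 ≤ σ0 + h` then `σT ≤ ζT ≤ σT + h`, and the
defect set `A_T = {x : σT(x) ∈ ℤ, ζT(x) = σT(x) + h}` equals the set of `x` such that
`σT(x)` has a maximizer `y` in `A_0 = {y : σ0(y) ∈ ℤ, ζ0(y) = σ0(y) + h}`. -/
theorem coupling_defect_set
    (d : ℕ) (hd : 1 ≤ d)
    (T : (Fin d → ℝ) → (Fin d → ℝ) → ℕ) (hT : ∀ x, T x x = 0)
    (σ0 σT ζ0 ζT : (Fin d → ℝ) → WithBot ℤ)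
    (hσ : IsSupProcess σ0 σT T) (hζ : IsSupProcess ζ0 ζT T)
    (h : ℕ) (hh : 1 ≤ h)
    (hcoup : ∀ y : Fin d → ℝ, σ0 y ≤ ζ0 y ∧ ζ0 y ≤ σ0 y + (h : WithBot ℤ)) :
    (∀ x : Fin d → ℝ, σT x ≤ ζT x ∧ ζT x ≤ σT x + (h : WithBot ℤ)) ∧
    (∀ x : Fin d → ℝ,
        (σT x ≠ ⊥ ∧ ζT x = σT x + (h : WithBot ℤ)) ↔
        ∃ y : Fin d → ℝ, IsMaximizer σ0 σT T x y ∧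
          σ0 y ≠ ⊥ ∧ ζ0 y = σ0 y + (h : WithBot ℤ)) :=
  coupling_defect_set_general d T σ0 σT ζ0 ζT hσ hζ h hcoup

end
end

section
/- Shock profile: let λ, ρ ∈ (0,∞)^d and u_0(x) = max(ρ·x, λ·x) (equivalently, u_0(x) = ρ·x when (ρ−λ)·x ≥ 0 and u_0(x) = λ·x when (ρ−λ)·x ≤ 0). Then for all t > 0: u(x,t) = max( ρ·x + t·f(ρ), λ·x + t·f(λ) ); if (ρ−λ)·x ≥ t(f(λ)−f(ρ)) then x + t·∇f(ρ) ∈ I(x,t), and if (ρ−λ)·x ≤ t(f(λ)−f(ρ)) then x + t·∇f(λ) ∈ I(x,t). In particular, if λ ≠ ρ, every point (x,t) with (ρ−λ)·x = t(f(λ)−f(ρ)) is a shock: I(x,t) contains at least the two distinct points x + t·∇f(ρ) and x + t·∇f(λ). -/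
/-!
For `z ≥ 0`, weighted AM–GM applied to the `d + 1` numbers `f(ρ), ρ₁z₁, …, ρ_d z_d`, whose
product is `κ · z₁⋯z_d`, gives `g(z) ≤ ρ·z + f(ρ)`, with equality at `z = -∇f(ρ)`, where all
`d + 1` numbers equal `f(ρ)`. Hence for `y ≤ x` the Hopf–Lax quantity of the linear datum `ρ·y` is
at most `ρ·x + t f(ρ)`, with equality at `y = x + t∇f(ρ)`. For `u₀ = max(ρ·, λ·)` it is therefore
bounded by the larger of the two affine values `ρ·x + t f(ρ)` and `λ·x + t f(λ)`, and the larger one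
is attained at the corresponding point `x + t∇f`; the condition on `(ρ − λ)·x` says which one is
larger. On the interface the two maximizers differ because `∇f` is injective on `(0,∞)^d`.
-/

open Set

noncomputable section

/-- `κ = (c/(d+1))^{d+1}`. -/
def kap (c : ℝ) (d : ℕ) : ℝ := (c / ((d : ℝ) + 1)) ^ (d + 1)

/-- The velocity `f(ρ) = κ (ρ₁⋯ρ_d)⁻¹`. -/
def fvel (c : ℝ) (d : ℕ) (ρ : Fin d → ℝ) : ℝ := kap c d / ∏ i, ρ i

/-- `(∇f(ρ))_i = −κ/((ρ₁⋯ρ_d) ρ_i)`. -/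
def gradf (c : ℝ) (d : ℕ) (ρ : Fin d → ℝ) : Fin d → ℝ :=
  fun i => -(kap c d) / ((∏ j, ρ j) * ρ i)

open Finset Matrix

lemma kap_nonneg {c : ℝ} (hc : 0 ≤ c) (d : ℕ) : 0 ≤ kap c d := by
  unfold kap; positivity

lemma kap_pos {c : ℝ} (hc : 0 < c) (d : ℕ) : 0 < kap c d := by
  unfold kap; positivity

lemma kap_rpow_inv {c : ℝ} (hc : 0 ≤ c) (d : ℕ) :
    kap c d ^ ((d : ℝ) + 1)⁻¹ = c / ((d : ℝ) + 1) := by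
  rw [kap, ← Real.rpow_natCast, ← Real.rpow_mul (by positivity)]
  push_cast
  rw [mul_inv_cancel₀ (by positivity), Real.rpow_one]

lemma fvel_nonneg {c : ℝ} (hc : 0 ≤ c) {d : ℕ} {ρ : Fin d → ℝ} (hρ : ∀ i, 0 < ρ i) :
    0 ≤ fvel c d ρ :=
  div_nonneg (kap_nonneg hc d) (prod_pos fun i _ => hρ i).le

lemma gfun_eq_geom_mean {c : ℝ} (hc : 0 ≤ c) {d : ℕ} {ρ z : Fin d → ℝ} (hρ : ∀ i, 0 < ρ i)
    (hz : 0 ≤ z) :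
    gfun c d z = ((d : ℝ) + 1) *
      ∏ o : Option (Fin d), o.elim (fvel c d ρ) (fun i => ρ i * z i) ^ ((d : ℝ) + 1)⁻¹ := by
  have hP : (∏ i, ρ i) ≠ 0 := (prod_pos fun i _ => hρ i).ne'
  have hprod : ∏ o : Option (Fin d), o.elim (fvel c d ρ) (fun i => ρ i * z i)
      = kap c d * ∏ i, z i := by
    simp only [Fintype.prod_option, Option.elim, prod_mul_distrib, fvel]
    field_simp
  rw [Real.finsetProd_rpow, hprod, Real.mul_rpow (kap_nonneg hc d) (prod_nonneg fun i _ => hz i),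
    kap_rpow_inv hc, gfun]
  · field_simp
  · rintro (_ | i) -
    exacts [fvel_nonneg hc hρ, mul_nonneg (hρ i).le (hz i)]

lemma mul_sum_inv_mul_option_elim {d : ℕ} (a : ℝ) (b : Fin d → ℝ) :
    ((d : ℝ) + 1) * ∑ o : Option (Fin d), ((d : ℝ) + 1)⁻¹ * o.elim a b = a + ∑ i, b i := by
  rw [← mul_sum, ← mul_assoc, mul_inv_cancel₀ (by positivity), one_mul, Fintype.sum_option]
  rfl

lemma sum_option_const_inv_succ (d : ℕ) : ∑ _o : Option (Fin d), ((d : ℝ) + 1)⁻¹ = 1 := by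
  simp only [sum_const, card_univ, Fintype.card_option, Fintype.card_fin, nsmul_eq_mul]
  push_cast
  exact mul_inv_cancel₀ (by positivity)

lemma gfun_le_dotProduct_add_fvel {c : ℝ} (hc : 0 ≤ c) {d : ℕ} {ρ z : Fin d → ℝ}
    (hρ : ∀ i, 0 < ρ i) (hz : 0 ≤ z) :
    gfun c d z ≤ ρ ⬝ᵥ z + fvel c d ρ := by
  rw [gfun_eq_geom_mean hc hρ hz, add_comm (dotProduct _ _), dotProduct,
    ← mul_sum_inv_mul_option_elim]
  gcongr
  refine Real.geom_mean_le_arith_mean_weighted _ _ _ (fun _ _ => by positivity)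
    (sum_option_const_inv_succ d) ?_
  rintro (_ | i) -
  exacts [fvel_nonneg hc hρ, mul_nonneg (hρ i).le (hz i)]

lemma gfun_neg_gradf {c : ℝ} (hc : 0 ≤ c) {d : ℕ} {ρ : Fin d → ℝ} (hρ : ∀ i, 0 < ρ i) :
    gfun c d (-gradf c d ρ) = ρ ⬝ᵥ (-gradf c d ρ) + fvel c d ρ := by
  have hgrad : -gradf c d ρ = fun i => fvel c d ρ / ρ i := by
    ext i
    simp only [Pi.neg_apply, gradf, fvel, neg_div, neg_neg, div_div]
  have hz : 0 ≤ -gradf c d ρ := by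
    rw [hgrad]; exact fun i => div_nonneg (fvel_nonneg hc hρ) (hρ i).le
  have hterms : ∀ o : Option (Fin d), o.elim (fvel c d ρ) (fun i => ρ i * (-gradf c d ρ) i)
      = fvel c d ρ := by
    rintro (_ | i)
    · rfl
    · simp only [hgrad, Option.elim]
      exact mul_div_cancel₀ _ (hρ i).ne'
  rw [gfun_eq_geom_mean hc hρ hz, add_comm (dotProduct _ _), dotProduct,
    ← mul_sum_inv_mul_option_elim]
  congr 1
  refine Real.geom_mean_eq_arith_mean_weighted_of_constant _ _ _ (fvel c d ρ)
    (fun _ _ => by positivity) (sum_option_const_inv_succ d) ?_ (fun o _ _ => hterms o)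
  intro o _
  rw [hterms]
  exact fvel_nonneg hc hρ

lemma dotProduct_add_gfun_le {c : ℝ} (hc : 0 ≤ c) {d : ℕ} {ρ x y : Fin d → ℝ}
    (hρ : ∀ i, 0 < ρ i) (hyx : y ≤ x) {t : ℝ} (ht : 0 < t) :
    ρ ⬝ᵥ y + t * gfun c d (t⁻¹ • (x - y)) ≤ ρ ⬝ᵥ x + t * fvel c d ρ := by
  have hz : 0 ≤ t⁻¹ • (x - y) := smul_nonneg (inv_nonneg.2 ht.le) (sub_nonneg.2 hyx)
  have hbound := mul_le_mul_of_nonneg_left (gfun_le_dotProduct_add_fvel hc hρ hz) ht.le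
  rw [dotProduct_smul, smul_eq_mul, mul_add, ← mul_assoc, mul_inv_cancel₀ ht.ne', one_mul,
    dotProduct_sub] at hbound
  linarith

lemma dotProduct_add_gfun_gradf {c : ℝ} (hc : 0 ≤ c) {d : ℕ} {ρ : Fin d → ℝ}
    (hρ : ∀ i, 0 < ρ i) (x : Fin d → ℝ) {t : ℝ} (ht : t ≠ 0) :
    ρ ⬝ᵥ (x + t • gradf c d ρ) + t * gfun c d (t⁻¹ • (x - (x + t • gradf c d ρ)))
      = ρ ⬝ᵥ x + t * fvel c d ρ := by
  rw [sub_add_cancel_left, smul_neg, inv_smul_smul₀ ht, gfun_neg_gradf hc hρ, dotProduct_add,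
    dotProduct_smul, dotProduct_neg, smul_eq_mul]
  ring

lemma gradf_nonpos {c : ℝ} (hc : 0 ≤ c) {d : ℕ} {ρ : Fin d → ℝ} (hρ : ∀ i, 0 < ρ i) :
    gradf c d ρ ≤ 0 := fun i =>
  div_nonpos_of_nonpos_of_nonneg (neg_nonpos.2 (kap_nonneg hc d))
    (mul_pos (prod_pos fun j _ => hρ j) (hρ i)).le

lemma add_smul_gradf_le {c : ℝ} (hc : 0 ≤ c) {d : ℕ} {ρ : Fin d → ℝ} (hρ : ∀ i, 0 < ρ i)
    (x : Fin d → ℝ) {t : ℝ} (ht : 0 ≤ t) : x + t • gradf c d ρ ≤ x :=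
  add_le_of_nonpos_right (smul_nonpos_of_nonneg_of_nonpos ht (gradf_nonpos hc hρ))

lemma eq_of_gradf_eq {c : ℝ} (hc : 0 < c) {d : ℕ} {ρ σ : Fin d → ℝ} (hρ : ∀ i, 0 < ρ i)
    (hσ : ∀ i, 0 < σ i) (h : gradf c d ρ = gradf c d σ) : ρ = σ := by
  have hPρ : 0 < ∏ j, ρ j := prod_pos fun j _ => hρ j
  have hPσ : 0 < ∏ j, σ j := prod_pos fun j _ => hσ j
  have hcoord : ∀ i, (∏ j, ρ j) * ρ i = (∏ j, σ j) * σ i := by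
    intro i
    have hi := congrFun h i
    simp only [gradf, neg_div, neg_inj] at hi
    rwa [div_eq_div_iff (mul_pos hPρ (hρ i)).ne' (mul_pos hPσ (hσ i)).ne',
      mul_right_inj' (kap_pos hc d).ne', eq_comm] at hi
  have hprod_pow : ∀ τ : Fin d → ℝ, ∏ i, (∏ j, τ j) * τ i = (∏ j, τ j) ^ (d + 1) := fun τ => by
    rw [prod_mul_distrib, prod_const, card_univ, Fintype.card_fin, pow_succ]
  have hP : ∏ j, ρ j = ∏ j, σ j := by
    refine (pow_left_inj₀ hPρ.le hPσ.le d.succ_ne_zero).1 ?_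
    rw [← hprod_pow, ← hprod_pow, prod_congr rfl fun i _ => hcoord i]
  ext i
  exact mul_left_cancel₀ hPρ.ne' ((hcoord i).trans (by rw [hP]))

lemma hlu_eq_and_mem_hlI_of_le {c : ℝ} {d : ℕ} {u0 : (Fin d → ℝ) → ℝ} {x : Fin d → ℝ} {t M : ℝ}
    (ht : t ≠ 0) (hle : ∀ y ≤ x, u0 y + t * gfun c d (t⁻¹ • (x - y)) ≤ M)
    {y₀ : Fin d → ℝ} (hy₀ : y₀ ≤ x) (hM : M ≤ u0 y₀ + t * gfun c d (t⁻¹ • (x - y₀))) :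
    hlu c d u0 x t = M ∧ y₀ ∈ hlI c d u0 x t := by
  have hgreatest : IsGreatest (hlSet c d u0 x t) M :=
    ⟨⟨y₀, hy₀, le_antisymm (hle y₀ hy₀) hM⟩, by rintro _ ⟨y, hy, rfl⟩; exact hle y hy⟩
  have hu : hlu c d u0 x t = M := by rw [hlu, if_neg ht, hgreatest.csSup_eq]
  exact ⟨hu, hy₀, hu.trans (le_antisymm hM (hle y₀ hy₀))⟩

lemma hlu_max_dotProduct_of_le {c : ℝ} (hc : 0 ≤ c) {d : ℕ} {ρ σ : Fin d → ℝ}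
    (hρ : ∀ i, 0 < ρ i) (hσ : ∀ i, 0 < σ i) {x : Fin d → ℝ} {t : ℝ} (ht : 0 < t)
    (hdom : σ ⬝ᵥ x + t * fvel c d σ ≤ ρ ⬝ᵥ x + t * fvel c d ρ) :
    hlu c d (fun z => max (ρ ⬝ᵥ z) (σ ⬝ᵥ z)) x t = ρ ⬝ᵥ x + t * fvel c d ρ ∧
      x + t • gradf c d ρ ∈ hlI c d (fun z => max (ρ ⬝ᵥ z) (σ ⬝ᵥ z)) x t := by
  refine hlu_eq_and_mem_hlI_of_le ht.ne' (fun y hy => ?_) (add_smul_gradf_le hc hρ x ht.le) ?_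
  · rw [← max_add_add_right]
    exact max_le (dotProduct_add_gfun_le hc hρ hy ht)
      ((dotProduct_add_gfun_le hc hσ hy ht).trans hdom)
  · rw [← dotProduct_add_gfun_gradf hc hρ x ht.ne']
    exact add_le_add_left (le_max_left _ _) _

theorem shock_profile_general
    (d : ℕ) (c : ℝ) (hc : 0 < c)
    (l p : Fin d → ℝ) (hl : ∀ i, 0 < l i) (hp : ∀ i, 0 < p i) :
    ∀ (x : Fin d → ℝ) (t : ℝ), 0 < t →
      (hlu c d (fun z => max (∑ i, p i * z i) (∑ i, l i * z i)) x t =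
          max ((∑ i, p i * x i) + t * fvel c d p) ((∑ i, l i * x i) + t * fvel c d l)) ∧
      ((∑ i, (p i - l i) * x i) ≥ t * (fvel c d l - fvel c d p) →
          x + t • gradf c d p ∈
            hlI c d (fun z => max (∑ i, p i * z i) (∑ i, l i * z i)) x t) ∧
      ((∑ i, (p i - l i) * x i) ≤ t * (fvel c d l - fvel c d p) →
          x + t • gradf c d l ∈
            hlI c d (fun z => max (∑ i, p i * z i) (∑ i, l i * z i)) x t) ∧
      (l ≠ p → (∑ i, (p i - l i) * x i) = t * (fvel c d l - fvel c d p) →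
          x + t • gradf c d p ∈
            hlI c d (fun z => max (∑ i, p i * z i) (∑ i, l i * z i)) x t ∧
          x + t • gradf c d l ∈
            hlI c d (fun z => max (∑ i, p i * z i) (∑ i, l i * z i)) x t ∧
          x + t • gradf c d p ≠ x + t • gradf c d l) := by
  intro x t ht
  have hswap : (fun z => max (l ⬝ᵥ z) (p ⬝ᵥ z)) = fun z => max (p ⬝ᵥ z) (l ⬝ᵥ z) :=
    funext fun z => max_comm _ _
  have of_p_dom := hlu_max_dotProduct_of_le (x := x) hc.le hp hl ht
  have of_l_dom := hswap ▸ hlu_max_dotProduct_of_le (x := x) hc.le hl hp ht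
  have hside : (∑ i, (p i - l i) * x i) - t * (fvel c d l - fvel c d p)
      = (p ⬝ᵥ x + t * fvel c d p) - (l ⬝ᵥ x + t * fvel c d l) := by
    simp only [dotProduct, sub_mul, sum_sub_distrib]
    ring
  have hp_mem (h : (∑ i, (p i - l i) * x i) ≥ t * (fvel c d l - fvel c d p)) :=
    (of_p_dom (by linarith)).2
  have hl_mem (h : (∑ i, (p i - l i) * x i) ≤ t * (fvel c d l - fvel c d p)) :=
    (of_l_dom (by linarith)).2
  refine ⟨?_, hp_mem, hl_mem, fun hlp hshock => ⟨hp_mem hshock.ge, hl_mem hshock.le, ?_⟩⟩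
  · rcases le_total (l ⬝ᵥ x + t * fvel c d l) (p ⬝ᵥ x + t * fvel c d p) with h | h
    · exact (of_p_dom h).1.trans (max_eq_left h).symm
    · exact (of_l_dom h).1.trans (max_eq_right h).symm
  · intro heq
    exact hlp (eq_of_gradf_eq hc hl hp (smul_right_injective _ ht.ne' (add_left_cancel heq)).symm)

/-- Shock profile: for `u₀(x) = max(ρ·x, λ·x)` with `λ, ρ ∈ (0,∞)^d`, and any `t > 0`:
`u(x,t) = max(ρ·x + t f(ρ), λ·x + t f(λ))`; on the side `(ρ−λ)·x ≥ t(f(λ)−f(ρ))` the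
point `x + t∇f(ρ)` is a maximizer, on the other side `x + t∇f(λ)` is a maximizer; and on
the interface, when `λ ≠ ρ`, both are maximizers and they are distinct (a shock). -/
theorem shock_profile
    (d : ℕ) (hd : 1 ≤ d) (c : ℝ) (hc : 0 < c)
    (l p : Fin d → ℝ) (hl : ∀ i, 0 < l i) (hp : ∀ i, 0 < p i) :
    ∀ (x : Fin d → ℝ) (t : ℝ), 0 < t →
      (hlu c d (fun z => max (∑ i, p i * z i) (∑ i, l i * z i)) x t =
          max ((∑ i, p i * x i) + t * fvel c d p) ((∑ i, l i * x i) + t * fvel c d l)) ∧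
      ((∑ i, (p i - l i) * x i) ≥ t * (fvel c d l - fvel c d p) →
          x + t • gradf c d p ∈
            hlI c d (fun z => max (∑ i, p i * z i) (∑ i, l i * z i)) x t) ∧
      ((∑ i, (p i - l i) * x i) ≤ t * (fvel c d l - fvel c d p) →
          x + t • gradf c d l ∈
            hlI c d (fun z => max (∑ i, p i * z i) (∑ i, l i * z i)) x t) ∧
      (l ≠ p → (∑ i, (p i - l i) * x i) = t * (fvel c d l - fvel c d p) →
          x + t • gradf c d p ∈
            hlI c d (fun z => max (∑ i, p i * z i) (∑ i, l i * z i)) x t ∧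
          x + t • gradf c d l ∈
            hlI c d (fun z => max (∑ i, p i * z i) (∑ i, l i * z i)) x t ∧
          x + t • gradf c d p ≠ x + t • gradf c d l) :=
  shock_profile_general d c hc l p hl hp

end
end

section
/- Let ν ≥ 2 and k ≥ 1 be integers and let a < b in ℝ^ν (coordinatewise strict inequality). If X_1, …, X_k are independent random points, each uniformly distributed on the rectangle [a,b] ⊆ ℝ^ν, then the probability that they form an increasing chain in some order — i.e., that there exists a permutation π of {1,…,k} with X_{π(1)} < X_{π(2)} < ⋯ < X_{π(k)}, where x < y means x_i < y_i for every coordinate i — equals (k!)^{−(ν−1)}. -/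
/-!
An increasing ordering of a chain is unique, so the event is the disjoint union over `π ∈ S_k`
of the events "`X ∘ π` is a chain", and these `k!` events are equally likely because the sample
is exchangeable. The event for `π = 1` asks that each of the `ν` coordinate sequences be strictly
increasing. The coordinates are independent, and an i.i.d. atomless real sequence of length `k`
is strictly increasing with probability `1/k!`: by the same argument its `k!` rearrangements are
disjoint, and they cover the almost sure event that the values are distinct. Hence the
probability is `k! · (k!)^{-ν}`.
-/

open MeasureTheory

noncomputable section

/-- The uniform distribution on the rectangle `[a,b] ⊆ ℝ^ν`. -/
def uniformBox (ν : ℕ) (a b : Fin ν → ℝ) : Measure (Fin ν → ℝ) :=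
  (volume (Set.Icc a b))⁻¹ • volume.restrict (Set.Icc a b)

open Set Function ProbabilityTheory
open scoped Nat ENNReal

theorem Tuple.perm_eq_of_strictMono_comp {k : ℕ} {α : Type*} [LinearOrder α] {y : Fin k → α}
    {π σ : Equiv.Perm (Fin k)} (hπ : StrictMono (y ∘ π)) (hσ : StrictMono (y ∘ σ)) :
    π = σ := by
  have hy : Injective y := hπ.injective.of_comp_right π.surjective
  exact Equiv.ext fun i => hy (congrFun (Tuple.unique_monotone hπ.monotone hσ.monotone) i)

theorem measurableSet_setOf_strictMono (k : ℕ) :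
    MeasurableSet {y : Fin k → ℝ | StrictMono y} := by
  simp only [StrictMono, ofPred_forall]
  measurability

section Exchangeable

variable {ι β : Type*} [Fintype ι] [MeasurableSpace β] (Q : Measure β) [SigmaFinite Q]

theorem measurePreserving_comp_perm (π : Equiv.Perm ι) :
    MeasurePreserving (fun X : ι → β => X ∘ π) (Measure.pi fun _ => Q)
      (Measure.pi fun _ => Q) := by
  convert measurePreserving_piCongrLeft (fun _ => Q) π.symm using 1
  ext X i
  simp [MeasurableEquiv.coe_piCongrLeft, Equiv.piCongrLeft_apply]

theorem measure_iUnion_preimage_comp_perm [DecidableEq ι] {S : Set (ι → β)}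
    (hS : MeasurableSet S)
    (hdisj : Pairwise (Disjoint on fun π : Equiv.Perm ι => (· ∘ π) ⁻¹' S)) :
    Measure.pi (fun _ => Q) (⋃ π : Equiv.Perm ι, (· ∘ π) ⁻¹' S) =
      (Fintype.card ι)! * Measure.pi (fun _ => Q) S := by
  have hmeas (π : Equiv.Perm ι) : MeasurableSet ((· ∘ π) ⁻¹' S) :=
    (measurePreserving_comp_perm Q π).measurable hS
  rw [measure_iUnion hdisj hmeas, tsum_fintype]
  simp_rw [(measurePreserving_comp_perm Q _).measure_preimage hS.nullMeasurableSet]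
  rw [Finset.sum_const, Finset.card_univ, Fintype.card_perm, nsmul_eq_mul]

end Exchangeable

theorem measurePreserving_swap_pi {ι κ α : Type*} [Fintype ι] [Fintype κ] [MeasurableSpace α]
    (μ : κ → Measure α) [∀ j, SigmaFinite (μ j)] :
    MeasurePreserving (swap : (ι → κ → α) → κ → ι → α)
      (Measure.pi fun _ : ι => Measure.pi μ)
      (Measure.pi fun j => Measure.pi fun _ : ι => μ j) := by
  classical
  have hmeas : Measurable (swap : (ι → κ → α) → κ → ι → α) := by fun_prop
  refine ⟨hmeas, (Measure.pi_eq_generateFrom (fun _ => generateFrom_pi)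
    (fun _ => IsPiSystem.pi fun _ => MeasurableSpace.isPiSystem_measurableSet)
    (fun j => Measure.FiniteSpanningSetsIn.pi fun _ => (μ j).toFiniteSpanningSetsIn) ?_).symm⟩
  intro s hs
  choose t ht hts using hs
  have hpre : swap ⁻¹' univ.pi s = univ.pi fun i => univ.pi fun j => t j i := by
    ext X
    simp [← hts, swap, forall_comm (α := ι)]
  rw [Measure.map_apply hmeas (.univ_pi fun j => hts j ▸ .univ_pi fun i => ht j i (mem_univ i)),
    hpre, Measure.pi_pi]
  simp_rw [Measure.pi_pi, ← hts, Measure.pi_pi]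
  exact Finset.prod_comm

section Sorting

variable {k : ℕ} (μ : Measure ℝ)

theorem measure_pi_setOf_apply_eq_apply [SigmaFinite μ] [NullSingletonClass μ] {i j : Fin k}
    (hij : i ≠ j) : Measure.pi (fun _ : Fin k => μ) {y | y i = y j} = 0 := by
  obtain ⟨n, rfl⟩ : ∃ n, k = n + 1 := Nat.exists_eq_add_one_of_ne_zero i.pos.ne'
  obtain ⟨j, rfl⟩ := Fin.exists_succAbove_eq hij.symm
  have hS : MeasurableSet {p : ℝ × (Fin n → ℝ) | p.1 = p.2 j} :=
    measurableSet_eq_fun measurable_fst ((measurable_pi_apply j).comp measurable_snd)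
  have hpre : {y : Fin (n + 1) → ℝ | y i = y (i.succAbove j)} =
      MeasurableEquiv.piFinSuccAbove (fun _ => ℝ) i ⁻¹' {p | p.1 = p.2 j} := by
    ext y
    simp [MeasurableEquiv.piFinSuccAbove_apply, Fin.removeNth]
  rw [hpre, (measurePreserving_piFinSuccAbove (fun _ => μ) i).measure_preimage
    hS.nullMeasurableSet, Measure.prod_apply_symm hS]
  simp [preimage, measure_singleton]

theorem measure_pi_setOf_not_injective [SigmaFinite μ] [NullSingletonClass μ] :
    Measure.pi (fun _ : Fin k => μ) {y | ¬ Injective y} = 0 := by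
  have hsub : {y : Fin k → ℝ | ¬ Injective y} ⊆
      ⋃ (i) (j) (_ : i ≠ j), {y | y i = y j} := by
    intro y hy
    simp only [Injective, not_forall] at hy
    obtain ⟨i, j, hval, hne⟩ := hy
    exact mem_iUnion₂.2 ⟨i, j, mem_iUnion.2 ⟨hne, hval⟩⟩
  exact measure_mono_null hsub <| measure_iUnion_null fun i => measure_iUnion_null fun j =>
    measure_iUnion_null fun hij => measure_pi_setOf_apply_eq_apply μ hij

theorem measure_pi_setOf_strictMono [IsProbabilityMeasure μ] [NullSingletonClass μ] :
    Measure.pi (fun _ : Fin k => μ) {y | StrictMono y} = (k ! : ℝ≥0∞)⁻¹ := by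
  set M := Measure.pi fun _ : Fin k => μ
  have hcover : {y : Fin k → ℝ | ¬ Injective y}ᶜ ⊆
      ⋃ π : Equiv.Perm (Fin k), (· ∘ π) ⁻¹' {y | StrictMono y} := fun y hy =>
    mem_iUnion.2 ⟨Tuple.sort y, (Tuple.monotone_sort y).strictMono_of_injective
      ((not_not.1 hy).comp (Tuple.sort y).injective)⟩
  have hnull := measure_pi_setOf_not_injective (k := k) μ
  have hfull : M (⋃ π : Equiv.Perm (Fin k), (· ∘ π) ⁻¹' {y | StrictMono y}) = 1 := by
    refine le_antisymm prob_le_one ?_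
    calc 1 = M {y | ¬ Injective y}ᶜ := ((prob_compl_eq_one_iff₀ (.of_null hnull)).2 hnull).symm
      _ ≤ _ := measure_mono hcover
  have hdisj : Pairwise (Disjoint on fun π : Equiv.Perm (Fin k) =>
      (· ∘ π) ⁻¹' {y : Fin k → ℝ | StrictMono y}) := fun π σ hne =>
    disjoint_left.2 fun y hπ hσ => hne (Tuple.perm_eq_of_strictMono_comp hπ hσ)
  rw [measure_iUnion_preimage_comp_perm μ (measurableSet_setOf_strictMono k) hdisj,
    Fintype.card_fin, mul_comm] at hfull
  exact ENNReal.eq_inv_of_mul_eq_one_left hfull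

end Sorting

section Chains

variable {κ : Type*} [Fintype κ] (k : ℕ) (μ : κ → Measure ℝ)
  [∀ l, IsProbabilityMeasure (μ l)] [∀ l, NullSingletonClass (μ l)]

theorem measure_pi_setOf_forall_strictMono :
    Measure.pi (fun _ : Fin k => Measure.pi μ) {X | ∀ l, StrictMono fun i => X i l} =
      (k ! : ℝ≥0∞)⁻¹ ^ Fintype.card κ := by
  have hS : MeasurableSet (univ.pi fun _ : κ => {y : Fin k → ℝ | StrictMono y}) :=
    .univ_pi fun _ => measurableSet_setOf_strictMono k
  have hpre : {X : Fin k → κ → ℝ | ∀ l, StrictMono fun i => X i l} =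
      swap ⁻¹' univ.pi fun _ => {y | StrictMono y} := by
    ext X
    simp
  rw [hpre, (measurePreserving_swap_pi μ).measure_preimage hS.nullMeasurableSet, Measure.pi_pi]
  simp [measure_pi_setOf_strictMono]

theorem measure_pi_setOf_exists_perm_chain [Nonempty κ] :
    Measure.pi (fun _ : Fin k => Measure.pi μ)
      {X : Fin k → κ → ℝ | ∃ π : Equiv.Perm (Fin k),
        ∀ i j : Fin k, i < j → ∀ l : κ, X (π i) l < X (π j) l} =
      ((k ! : ℝ≥0∞) ^ (Fintype.card κ - 1))⁻¹ := by
  set S := {X : Fin k → κ → ℝ | ∀ l, StrictMono fun i => X i l}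
  have hchains : {X : Fin k → κ → ℝ | ∃ π : Equiv.Perm (Fin k),
      ∀ i j : Fin k, i < j → ∀ l : κ, X (π i) l < X (π j) l} =
        ⋃ π : Equiv.Perm (Fin k), (· ∘ π) ⁻¹' S := by
    ext X
    simp only [S, mem_ofPred_eq, mem_iUnion, mem_preimage, comp_apply]
    exact exists_congr fun π => ⟨fun h l i j hij => h i j hij l, fun h i j hij l => h l hij⟩
  have hS : MeasurableSet S := by
    simp only [S, StrictMono, ofPred_forall]
    measurability
  have hdisj : Pairwise (Disjoint on fun π : Equiv.Perm (Fin k) => (· ∘ π) ⁻¹' S) :=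
    fun π σ hne => disjoint_left.2 fun X hπ hσ =>
      let l := Classical.arbitrary κ
      hne (Tuple.perm_eq_of_strictMono_comp (y := fun i => X i l) (hπ l) (hσ l))
  rw [hchains, measure_iUnion_preimage_comp_perm _ hS hdisj, Fintype.card_fin,
    measure_pi_setOf_forall_strictMono]
  obtain ⟨n, hn⟩ := Nat.exists_eq_add_one_of_ne_zero (Fintype.card_ne_zero (α := κ))
  have hk : (k ! : ℝ≥0∞) ≠ 0 := by positivity
  rw [hn, Nat.add_sub_cancel, pow_succ', ← mul_assoc, ENNReal.mul_inv_cancel hk (by simp),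
    one_mul, ENNReal.inv_pow]

end Chains

instance ProbabilityTheory.cond.instNullSingletonClass {Ω : Type*} [MeasurableSpace Ω]
    (μ : Measure Ω) [NullSingletonClass μ] (s : Set Ω) : NullSingletonClass μ[|s] :=
  ⟨fun x => cond_absolutelyContinuous (measure_singleton x)⟩

theorem ProbabilityTheory.cond_pi {ι : Type*} [Fintype ι] {α : ι → Type*}
    [∀ i, MeasurableSpace (α i)] (μ : ∀ i, Measure (α i)) [∀ i, SigmaFinite (μ i)]
    {s : ∀ i, Set (α i)} (hs : ∀ i, MeasurableSet (s i)) (hfin : ∀ i, μ i (s i) ≠ ∞) :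
    (Measure.pi μ)[|univ.pi s] = Measure.pi fun i => (μ i)[|s i] := by
  refine (Measure.pi_eq fun t ht => ?_).symm
  rw [cond_apply (.univ_pi hs), Measure.pi_pi, ← pi_inter_distrib, Measure.pi_pi,
    ENNReal.prod_inv_distrib fun i _ j _ _ => .inr (hfin j), ← Finset.prod_mul_distrib]
  simp_rw [cond_apply (hs _)]

theorem prob_uniform_points_form_chain_general
    (ν k : ℕ) (hν : 2 ≤ ν)
    (a b : Fin ν → ℝ) (hab : ∀ i, a i < b i) :
    Measure.pi (fun _ : Fin k => uniformBox ν a b)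
      {X : Fin k → Fin ν → ℝ | ∃ π : Equiv.Perm (Fin k),
        ∀ i j : Fin k, i < j → ∀ l : Fin ν, X (π i) l < X (π j) l} =
      (((k.factorial : ENNReal)) ^ (ν - 1))⁻¹ := by
  have hbox : uniformBox ν a b = Measure.pi fun l => volume[|Icc (a l) (b l)] := by
    rw [uniformBox, ← ProbabilityTheory.cond, ← pi_univ_Icc, volume_pi,
      cond_pi _ (fun _ => measurableSet_Icc) fun _ => measure_Icc_lt_top.ne]
  have : ∀ l, IsProbabilityMeasure volume[|Icc (a l) (b l)] := fun l =>
    cond_isProbabilityMeasure_of_finite (by simp [hab l]) measure_Icc_lt_top.ne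
  have : Nonempty (Fin ν) := ⟨⟨0, by omega⟩⟩
  rw [hbox, measure_pi_setOf_exists_perm_chain, Fintype.card_fin]

/-- If `X₁, …, X_k` are i.i.d. uniform points in the rectangle `[a,b] ⊆ ℝ^ν` (`a < b`
coordinatewise), the probability that they form an increasing chain in some order —
i.e. that some permutation arranges them strictly increasingly in every coordinate —
equals `(k!)^{−(ν−1)}`. -/
theorem prob_uniform_points_form_chain
    (ν k : ℕ) (hν : 2 ≤ ν) (hk : 1 ≤ k)
    (a b : Fin ν → ℝ) (hab : ∀ i, a i < b i) :
    Measure.pi (fun _ : Fin k => uniformBox ν a b)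
      {X : Fin k → Fin ν → ℝ | ∃ π : Equiv.Perm (Fin k),
        ∀ i j : Fin k, i < j → ∀ l : Fin ν, X (π i) l < X (π j) l} =
      (((k.factorial : ENNReal)) ^ (ν - 1))⁻¹ :=
  prob_uniform_points_form_chain_general ν k hν a b hab
end
end
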